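/- arXiv:2308.04882 — 8 statements merged into one kernel-verified Lean document; each statement's English description precedes it below -/
import Mathlib

section
/- Let G be a connected graph with radius r ≥ 1 and let c be a center of G (a vertex of eccentricity r). Let P be an isometric path in G of length r with c as one endpoint. Then there exists an isometric path Q in G with c as one endpoint such that V(P) ∩ V(Q) = {c} and r − 1 ≤ length(Q) ≤ r. -/
open SimpleGraph

variable {V : Type*}

/-- `p` restricted to `{0,…,k}` is an isometric path of length `k` in `G`. -/
def IsIsomPath (G : SimpleGraph V) (p : ℕ → V) (k : ℕ) : Prop :=
  ∀ i j, i ≤ k → j ≤ k → G.dist (p i) (p j) = max i j - min i j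

def pathVerts (p : ℕ → V) (k : ℕ) : Set V := {x | ∃ i, i ≤ k ∧ p i = x}

noncomputable def ecc (G : SimpleGraph V) [Fintype V] (v : V) : ℕ :=
  Finset.univ.sup (fun u => G.dist v u)

noncomputable def grad (G : SimpleGraph V) [Fintype V] : ℕ :=
  sInf (Set.range (ecc G))

noncomputable def gdiam (G : SimpleGraph V) [Fintype V] : ℕ :=
  Finset.univ.sup (fun v => ecc G v)

def IsMultipacking (G : SimpleGraph V) [Fintype V] (M : Set V) : Prop :=
  ∀ v : V, ∀ r : ℕ, 1 ≤ r → r ≤ gdiam G →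
    (M ∩ {u | G.dist v u ≤ r}).ncard ≤ r

noncomputable def mp (G : SimpleGraph V) [Fintype V] : ℕ :=
  sSup {n | ∃ M : Set V, IsMultipacking G M ∧ M.ncard = n}

def IsDomBroadcast (G : SimpleGraph V) [Fintype V] (f : V → ℕ) : Prop :=
  (∀ v, f v ≤ gdiam G) ∧ ∀ u : V, ∃ v : V, 1 ≤ f v ∧ G.dist u v ≤ f v

noncomputable def gammaB (G : SimpleGraph V) [Fintype V] : ℕ :=
  sInf {n | ∃ f : V → ℕ, IsDomBroadcast G f ∧ ∑ v, f v = n}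

noncomputable def gammaDom (G : SimpleGraph V) [Fintype V] : ℕ :=
  sInf {n | ∃ D : Finset V, (∀ u : V, ∃ v ∈ D, u = v ∨ G.Adj u v) ∧ D.card = n}

def IsFracMP (G : SimpleGraph V) [Fintype V] (w : V → ℝ) : Prop :=
  (∀ v, 0 ≤ w v) ∧ ∀ v : V, ∀ r : ℕ, 1 ≤ r →
    (∑ u ∈ Finset.univ.filter (fun u => G.dist v u ≤ r), w u) ≤ r

noncomputable def mpf (G : SimpleGraph V) [Fintype V] : ℝ :=
  sSup {s | ∃ w : V → ℝ, IsFracMP G w ∧ ∑ v, w v = s}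

/-- A cactus: connected and every edge lies on at most one cycle. -/
def IsCactus (G : SimpleGraph V) : Prop :=
  G.Connected ∧ ∀ (u v : V) (c₁ : G.Walk u u) (c₂ : G.Walk v v),
    c₁.IsCycle → c₂.IsCycle → ∀ e, e ∈ c₁.edges → e ∈ c₂.edges →
      (∀ e', e' ∈ c₁.edges ↔ e' ∈ c₂.edges)

def pentRel (k : ℕ) (x y : Fin (3*k) × Fin 5) : Prop :=
  (x.1 = y.1 ∧ (x.2.val + 1) % 5 = y.2.val) ∨
  (x.1.val + 1 = y.1.val ∧ x.2.val = 1 ∧ y.2.val = 4)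

def Gk (k : ℕ) : SimpleGraph (Fin (3*k) × Fin 5) := SimpleGraph.fromRel (pentRel k)


lemma getVert_dist_le {G : SimpleGraph V} (hG : G.Connected) {u v : V} (w : G.Walk u v)
    (i j : ℕ) (hij : i ≤ j) : G.dist (w.getVert i) (w.getVert j) ≤ j - i := by
  induction j with
  | zero => simp_all
  | succ j ih =>
    rcases Nat.lt_or_ge i (j+1) with h | h
    · have h1 : i ≤ j := Nat.lt_succ_iff.mp h
      have step : G.dist (w.getVert j) (w.getVert (j+1)) ≤ 1 := by
        rcases Nat.lt_or_ge j w.length with hj | hj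
        · simpa using SimpleGraph.dist_le (w.adj_getVert_succ hj).toWalk
        · rw [w.getVert_of_length_le hj, w.getVert_of_length_le (hj.trans (Nat.le_succ j))]
          simp [SimpleGraph.dist_self]
      calc G.dist (w.getVert i) (w.getVert (j+1))
          ≤ G.dist (w.getVert i) (w.getVert j) + G.dist (w.getVert j) (w.getVert (j+1)) :=
            hG.dist_triangle
        _ ≤ (j - i) + 1 := Nat.add_le_add (ih h1) step
        _ ≤ j + 1 - i := by omega
    · have : i = j + 1 := le_antisymm hij h
      subst this; simp [SimpleGraph.dist_self]

lemma shortest_walk_isom {G : SimpleGraph V} (hG : G.Connected) {u v : V} (w : G.Walk u v)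
    (hw : w.length = G.dist u v) : IsIsomPath G w.getVert w.length := by
  have key : ∀ i j, i ≤ j → j ≤ w.length →
      G.dist (w.getVert i) (w.getVert j) = j - i := by
    intro i j hij hj
    refine le_antisymm (getVert_dist_le hG w i j hij) ?_
    have h1 : G.dist u (w.getVert i) ≤ i := by
      simpa using getVert_dist_le hG w 0 i (Nat.zero_le i)
    have h2 : G.dist (w.getVert j) v ≤ w.length - j := by
      have := getVert_dist_le hG w j w.length hj
      rwa [w.getVert_length] at this
    have htri : G.dist u v ≤ G.dist u (w.getVert i) +
        (G.dist (w.getVert i) (w.getVert j) + G.dist (w.getVert j) v) :=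
      hG.dist_triangle.trans (Nat.add_le_add_left hG.dist_triangle _)
    omega
  intro i j hi hj
  rcases le_total i j with h | h
  · rw [key i j h hj]; omega
  · rw [SimpleGraph.dist_comm, key j i h hi]; omega

theorem disjoint_radial_path (G : SimpleGraph V) [Fintype V] (hG : G.Connected)
    (r : ℕ) (hr : 1 ≤ r) (hrad : grad G = r) (c : V) (hc : ecc G c = r)
    (p : ℕ → V) (hp : IsIsomPath G p r) (hp0 : p 0 = c) :
    ∃ (q : ℕ → V) (r' : ℕ), r - 1 ≤ r' ∧ r' ≤ r ∧ IsIsomPath G q r' ∧ q 0 = c ∧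
      pathVerts p r ∩ pathVerts q r' = {c} := by
  -- x = p 1, the neighbor of c on P
  set x := p 1 with hx
  have hNE : Nonempty V := ⟨c⟩
  -- distances along p
  have hdcp : ∀ i, i ≤ r → G.dist c (p i) = i := by
    intro i hi
    have := hp 0 i (Nat.zero_le r) hi
    simpa [hp0] using this
  have hdxp : ∀ i, 1 ≤ i → i ≤ r → G.dist x (p i) = i - 1 := by
    intro i h1 hi
    have := hp 1 i hr hi
    simpa [hx, Nat.max_eq_right h1, Nat.min_eq_left h1] using this
  -- ecc x ≥ r
  have heccx : r ≤ ecc G x := by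
    rw [← hrad]; exact Nat.sInf_le ⟨x, rfl⟩
  -- choose y with dist x y = ecc x
  obtain ⟨y, -, hy⟩ := Finset.exists_mem_eq_sup (Finset.univ : Finset V)
    Finset.univ_nonempty (fun u => G.dist x u)
  have hxy : r ≤ G.dist x y := by rw [← hy]; exact heccx
  -- dist c y ≤ r
  have hcy_le : G.dist c y ≤ r := by
    rw [← hc]; exact Finset.le_sup (Finset.mem_univ y)
  -- dist c x = 1
  have hcx : G.dist c x = 1 := by simpa using hdcp 1 hr
  have hcy_ge : r - 1 ≤ G.dist c y := by
    have hxc : G.dist x c = 1 := by rw [SimpleGraph.dist_comm]; exact hcx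
    have : G.dist x y ≤ G.dist x c + G.dist c y := hG.dist_triangle
    omega
  -- shortest walk from c to y
  obtain ⟨w, hw⟩ := hG.exists_walk_length_eq_dist c y
  set r' := w.length with hr'
  have hisoq : IsIsomPath G w.getVert r' := shortest_walk_isom hG w hw
  have hq0 : w.getVert 0 = c := w.getVert_zero
  have hqr' : w.getVert r' = y := w.getVert_length
  refine ⟨w.getVert, r', by omega, by omega, hisoq, hq0, ?_⟩
  apply Set.eq_of_subset_of_subset
  · rintro z ⟨⟨i, hi, hpi⟩, ⟨j, hj, hqj⟩⟩
    rcases Nat.eq_zero_or_pos i with h0 | h1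
    · subst h0; simp [← hpi, hp0]
    · exfalso
      -- dist c z computed two ways: i = j
      have e1 : G.dist c z = i := by rw [← hpi]; exact hdcp i hi
      have e2 : G.dist c z = j := by
        have := hisoq 0 j (Nat.zero_le r') hj
        simpa [hq0, hqj] using this
      have hij : i = j := by omega
      have hjr : 1 ≤ j := by omega
      have hxz : G.dist x z = i - 1 := by rw [← hpi]; exact hdxp i h1 hi
      have hzy : G.dist z y = r' - j := by
        have := hisoq j r' hj (le_refl r')
        rw [hqj, hqr', Nat.max_eq_right hj, Nat.min_eq_left hj] at this
        exact this
      have : G.dist x y ≤ G.dist x z + G.dist z y := hG.dist_triangle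
      omega
  · rintro z rfl
    exact ⟨⟨0, Nat.zero_le r, hp0⟩, ⟨0, Nat.zero_le r', hq0⟩⟩
end

section
/- Let G be a graph, k a positive integer, and P = (v_0, v_1, ..., v_{k-1}) an isometric path in G with k vertices. Then the set M = {v_i : 0 ≤ i ≤ k−1, i ≡ 0 (mod 3)} of every third vertex on this path is a multipacking of G, and |M| = ⌈k/3⌉. -/
open SimpleGraph

variable {V : Type*}

theorem isometric_path_multipacking (G : SimpleGraph V) [Fintype V] (hG : G.Connected)
    (k : ℕ) (hk : 1 ≤ k) (p : ℕ → V) (hp : IsIsomPath G p (k - 1)) :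
    IsMultipacking G {x | ∃ i, i ≤ k - 1 ∧ i % 3 = 0 ∧ p i = x} ∧
      ({x | ∃ i, i ≤ k - 1 ∧ i % 3 = 0 ∧ p i = x} : Set V).ncard = (k + 2) / 3 := by
  classical
  set n := k - 1 with hn
  have hinj : ∀ i j, i ≤ n → j ≤ n → p i = p j → i = j := by
    intro i j hi hj hpe
    have := hp i j hi hj
    rw [hpe, SimpleGraph.dist_self] at this
    omega
  constructor
  · intro v r hr _
    set S' : Finset ℕ := (Finset.range (n+1)).filter
      (fun i => i % 3 = 0 ∧ G.dist v (p i) ≤ r) with hS'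
    have hset : {x | ∃ i, i ≤ n ∧ i % 3 = 0 ∧ p i = x} ∩ {u | G.dist v u ≤ r}
        = ↑(S'.image p) := by
      ext x
      simp only [Set.mem_inter_iff, Set.mem_setOf_eq, Finset.coe_image, Set.mem_image,
        Finset.mem_coe, Finset.mem_filter, Finset.mem_range, hS']
      constructor
      · rintro ⟨⟨i, hi, h3, rfl⟩, hd⟩
        exact ⟨i, ⟨by omega, h3, hd⟩, rfl⟩
      · rintro ⟨i, ⟨hi, h3, hd⟩, rfl⟩
        exact ⟨⟨i, by omega, h3, rfl⟩, hd⟩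
    rw [hset, Set.ncard_coe_finset]
    rcases S'.eq_empty_or_nonempty with hE | hNe
    · simp [hE]
    · have hmemS' : ∀ i ∈ S', i ≤ n ∧ i % 3 = 0 ∧ G.dist v (p i) ≤ r := by
        intro i hi
        simp only [hS', Finset.mem_filter, Finset.mem_range] at hi
        exact ⟨by omega, hi.2⟩
      have hcard : (S'.image p).card = S'.card := Finset.card_image_of_injOn (by
        intro i hi j hj hpe
        exact hinj i j (hmemS' i hi).1 (hmemS' j hj).1 hpe)
      rw [hcard]
      set a := S'.min' hNe with hadef
      set b := S'.max' hNe with hbdef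
      have ha := hmemS' a (S'.min'_mem hNe)
      have hb := hmemS' b (S'.max'_mem hNe)
      have hle : a ≤ b := S'.min'_le _ (S'.max'_mem hNe)
      have hab : b - a ≤ 2 * r := by
        have hd : G.dist (p a) (p b) = max a b - min a b := hp a b ha.1 hb.1
        have htri : G.dist (p a) (p b) ≤ G.dist (p a) v + G.dist v (p b) :=
          hG.dist_triangle
        have h1 : G.dist (p a) v ≤ r := by rw [SimpleGraph.dist_comm]; exact ha.2.2
        have h2 : G.dist v (p b) ≤ r := hb.2.2
        omega
      have himg : S'.image (fun i => i / 3) ⊆ Finset.Icc (a/3) (b/3) := by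
        intro j hj
        simp only [Finset.mem_image] at hj
        obtain ⟨i, hi, rfl⟩ := hj
        have h1 := S'.min'_le i hi
        have h2 := S'.le_max' i hi
        simp only [Finset.mem_Icc]
        exact ⟨Nat.div_le_div_right h1, Nat.div_le_div_right h2⟩
      have hinj3 : Set.InjOn (fun i => i / 3) ↑S' := by
        intro i hi j hj h
        have h1 := (hmemS' i hi).2.1
        have h2 := (hmemS' j hj).2.1
        simp only at h
        omega
      have hc1 : (S'.image (fun i => i/3)).card = S'.card :=
        Finset.card_image_of_injOn hinj3
      have hc2 : (S'.image (fun i => i/3)).card ≤ (Finset.Icc (a/3) (b/3)).card :=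
        Finset.card_le_card himg
      rw [Nat.card_Icc] at hc2
      have h3a : a % 3 = 0 := ha.2.1
      have h3b : b % 3 = 0 := hb.2.1
      omega
  · have heq : (Finset.range (n+1)).filter (fun i => i % 3 = 0)
        = (Finset.range (n/3+1)).image (fun j => 3*j) := by
      ext i
      simp only [Finset.mem_filter, Finset.mem_range, Finset.mem_image]
      constructor
      · rintro ⟨h1, h2⟩
        exact ⟨i/3, by omega, by omega⟩
      · rintro ⟨j, hj, rfl⟩
        omega
    have hMeq : {x | ∃ i, i ≤ n ∧ i % 3 = 0 ∧ p i = x}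
        = ↑(((Finset.range (n+1)).filter (fun i => i % 3 = 0)).image p) := by
      ext x
      simp only [Set.mem_setOf_eq, Finset.coe_image, Set.mem_image, Finset.mem_coe,
        Finset.mem_filter, Finset.mem_range]
      constructor
      · rintro ⟨i, hi, h3, rfl⟩
        exact ⟨i, ⟨by omega, h3⟩, rfl⟩
      · rintro ⟨i, ⟨hi, h3⟩, rfl⟩
        exact ⟨i, by omega, h3, rfl⟩
    rw [hMeq, Set.ncard_coe_finset]
    rw [Finset.card_image_of_injOn (by
      intro i hi j hj hpe
      simp only [Finset.coe_filter, Finset.mem_range, Set.mem_setOf_eq] at hi hj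
      exact hinj i j (by omega) (by omega) hpe)]
    rw [heq, Finset.card_image_of_injective _ (fun x y h => by omega), Finset.card_range]
    omega
end

section
/- Let G be a cactus and let P and Q be two isometric paths of G with a common endpoint c (a center of G with rad(G) = r) satisfying V(P) ∩ V(Q) = {c}, length(P) = r and r−1 ≤ length(Q) ≤ r. Then there is at most one path P₁ in G that avoids c, joins a vertex v of P∖{c} with a vertex w of Q∖{c}, and intersects P only at v and Q only at w. -/
/-!
A connecting path `W` from `p i` to `q j`, closed up by the segments of `p` and `q` from `c`,
is a cycle through the edge `c p₁`. In a cactus two cycles sharing an edge have the same edge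
set, hence the same vertex set. Since `W` meets `p` and `q` only at its ends, this vertex set
determines `i` and `j`; the edges of the cycle off `p` and `q` are then exactly those of `W`,
and a path is determined by its edge set.
-/

open SimpleGraph

variable {V : Type*}

/-- `W` is a path joining a non-center vertex of `p` with a non-center vertex of `q`,
avoiding `c`, and meeting `p` only at its first endpoint and `q` only at its last. -/
def ConnPath (G : SimpleGraph V) (p q : ℕ → V) (r r' : ℕ) (c : V)
    (x y : V) (W : G.Walk x y) : Prop :=
  W.IsPath ∧ (∃ i, 1 ≤ i ∧ i ≤ r ∧ p i = x) ∧ (∃ j, 1 ≤ j ∧ j ≤ r' ∧ q j = y) ∧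
  c ∉ W.support ∧
  {z | z ∈ W.support} ∩ pathVerts p r = {x} ∧
  {z | z ∈ W.support} ∩ pathVerts q r' = {y}

theorem Set.eq_of_mem_of_inter_eq_singleton {α : Type*} {s t : Set α} {a z : α}
    (h : s ∩ t = {a}) (hs : z ∈ s) (ht : z ∈ t) : z = a := by
  have hz : z ∈ s ∩ t := ⟨hs, ht⟩
  rwa [h] at hz

namespace SimpleGraph.Walk

variable {G : SimpleGraph V} {u v w u' v' : V}

theorem IsPath.start_notMem_support_tail {p : G.Walk u v} (hp : p.IsPath) :
    u ∉ p.support.tail :=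
  (List.nodup_cons.mp (p.cons_tail_support ▸ hp.support_nodup)).1

theorem IsPath.append {p : G.Walk u v} {q : G.Walk v w} (hp : p.IsPath) (hq : q.IsPath)
    (h : ∀ z ∈ p.support, z ∈ q.support → z = v) : (p.append q).IsPath := by
  rw [isPath_def, support_append, List.nodup_append]
  refine ⟨hp.support_nodup, hq.support_nodup.tail, fun a ha b hb hab => ?_⟩
  subst hab
  obtain rfl := h a ha (List.mem_of_mem_tail hb)
  exact hq.start_notMem_support_tail hb

theorem IsPath.isCycle_append_append_reverse {c x y : V} {A : G.Walk c x} {W : G.Walk x y}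
    {B : G.Walk c y} (hA : A.IsPath) (hW : W.IsPath) (hB : B.IsPath)
    (hAW : ∀ z ∈ A.support, z ∈ W.support → z = x)
    (hWB : ∀ z ∈ W.support, z ∈ B.support → z = y)
    (hAB : ∀ z ∈ A.support, z ∈ B.support → z = c) (hxc : x ≠ c) :
    (A.append (W.append B.reverse)).IsCycle := by
  have hyc : y ≠ c := by
    rintro rfl
    exact hxc (hAW _ A.start_mem_support W.end_mem_support).symm
  have hxy : x ≠ y := fun h => hxc (hAB x A.end_mem_support (h ▸ B.end_mem_support))
  have hWB' : (W.append B.reverse).IsPath :=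
    hW.append hB.reverse fun z hzW hzB => hWB z hzW (by simpa using hzB)
  refine hA.isCycle_append hWB' (fun z hzA hz => ?_) (Or.inr ?_)
  · rcases (mem_support_append_iff _ _).mp (List.mem_of_mem_tail hz) with hzW | hzB
    · exact hWB'.start_notMem_support_tail (hAW z (List.mem_of_mem_tail hzA) hzW ▸ hz)
    · obtain rfl := hAB z (List.mem_of_mem_tail hzA) (by simpa using hzB)
      exact hA.start_notMem_support_tail hzA
  · have hW0 : W.length ≠ 0 := fun h => hxy (W.eq_of_length_eq_zero h)
    have hB0 : B.length ≠ 0 := fun h => hyc (B.eq_of_length_eq_zero h).symm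
    rw [length_append, length_reverse]
    omega

theorem mem_support_iff_of_forall_mem_edges_iff {p : G.Walk u v} {q : G.Walk u' v'}
    (hp : ¬p.Nil) (hq : ¬q.Nil) (h : ∀ e, e ∈ p.edges ↔ e ∈ q.edges) :
    w ∈ p.support ↔ w ∈ q.support := by
  simp only [mem_support_iff_exists_mem_edges_of_not_nil hp,
    mem_support_iff_exists_mem_edges_of_not_nil hq, h]

theorem notMem_edges_of_mem_edges {p : G.Walk u v} {q : G.Walk u' v'} {e : Sym2 V}
    (h : ∀ z ∈ p.support, z ∈ q.support → z = w) (he : e ∈ p.edges) : e ∉ q.edges := by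
  induction e using Sym2.ind with | h a b => ?_
  intro he'
  have ha := h a (p.fst_mem_support_of_mem_edges he) (q.fst_mem_support_of_mem_edges he')
  have hb := h b (p.snd_mem_support_of_mem_edges he) (q.snd_mem_support_of_mem_edges he')
  exact (p.adj_of_mem_edges he).ne (ha.trans hb.symm)

theorem IsPath.eq_of_forall_mem_edges_iff {p q : G.Walk u v} (hp : p.IsPath) (hq : q.IsPath)
    (h : ∀ e, e ∈ p.edges ↔ e ∈ q.edges) : p = q := by
  induction p with
  | nil => exact (isPath_iff_nil.mp hq).eq_nil.symm
  | @cons u b v hadj p ih =>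
    cases q with
    | nil => simpa using (h s(u, b)).1 (by simp)
    | cons hadj' q =>
      have hb := hq.eq_snd_of_mem_edges ((h s(u, b)).1 (by simp))
      simp only [snd_cons] at hb
      subst hb
      rw [cons_isPath_iff] at hp hq
      have avoids : ∀ {e} (r : G.Walk b v), u ∉ r.support → e ∈ r.edges → e ≠ s(u, b) :=
        fun r hu he hes => hu (r.fst_mem_support_of_mem_edges (hes ▸ he))
      congr 1
      refine ih hp.1 hq.1 fun e => ?_
      specialize h e
      simp only [edges_cons, List.mem_cons] at h
      exact ⟨fun he => (h.1 (Or.inr he)).resolve_left (avoids p hp.2 he),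
        fun he => (h.2 (Or.inr he)).resolve_left (avoids q hq.2 he)⟩

end SimpleGraph.Walk

section IsometricPath

variable {G : SimpleGraph V} {p q : ℕ → V} {r r' : ℕ} {c : V}

theorem mem_pathVerts {i k : ℕ} (hk : k ≤ i) : p k ∈ pathVerts p i := ⟨k, hk, rfl⟩

theorem pathVerts_mono {i j : ℕ} (h : i ≤ j) : pathVerts p i ⊆ pathVerts p j :=
  fun _ ⟨k, hk, hpk⟩ => ⟨k, hk.trans h, hpk⟩

theorem IsIsomPath.injOn (hp : IsIsomPath G p r) {a b : ℕ} (ha : a ≤ r) (hb : b ≤ r)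
    (hab : p a = p b) : a = b := by
  have hd := hp a b ha hb
  rw [hab, dist_self] at hd
  omega

theorem IsIsomPath.adj (hp : IsIsomPath G p r) {k : ℕ} (hk : k < r) :
    G.Adj (p k) (p (k + 1)) := by
  have hd := hp k (k + 1) hk.le hk
  rw [show max k (k + 1) - min k (k + 1) = 1 by omega] at hd
  exact dist_eq_one_iff_adj.mp hd

def IsIsomPath.walk (hp : IsIsomPath G p r) : (i : ℕ) → i ≤ r → G.Walk (p 0) (p i)
  | 0, _ => Walk.nil
  | i + 1, hi => (hp.walk i (Nat.le_of_succ_le hi)).concat (hp.adj hi)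

theorem IsIsomPath.mem_support_walk (hp : IsIsomPath G p r) {i : ℕ} (hi : i ≤ r) {v : V} :
    v ∈ (hp.walk i hi).support ↔ v ∈ pathVerts p i := by
  induction i with
  | zero => simp [IsIsomPath.walk, pathVerts, eq_comm]
  | succ i ih =>
    rw [IsIsomPath.walk, Walk.support_concat, List.mem_append, List.mem_singleton, ih]
    simp only [pathVerts, Set.mem_ofPred_eq, Nat.le_succ_iff]
    grind

theorem IsIsomPath.isPath_walk (hp : IsIsomPath G p r) {i : ℕ} (hi : i ≤ r) :
    (hp.walk i hi).IsPath := by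
  induction i with
  | zero => exact Walk.IsPath.nil
  | succ i ih =>
    refine (ih _).concat (fun hmem => ?_) _
    obtain ⟨k, hk, hpk⟩ := (hp.mem_support_walk _).mp hmem
    have := hp.injOn (hk.trans (Nat.le_of_succ_le hi)) hi hpk
    omega

theorem IsIsomPath.mk_mem_edges_walk (hp : IsIsomPath G p r) {i : ℕ} (hi : i ≤ r) (hi1 : 1 ≤ i) :
    s(p 0, p 1) ∈ (hp.walk i hi).edges := by
  induction i with
  | zero => omega
  | succ i ih =>
    rw [IsIsomPath.walk, Walk.edges_concat, List.concat_eq_append, List.mem_append,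
      List.mem_singleton]
    rcases Nat.eq_zero_or_pos i with rfl | hi0
    · exact Or.inr rfl
    · exact Or.inl (ih _ hi0)

theorem IsIsomPath.le_of_mem (hp : IsIsomPath G p r) (hp0 : p 0 = c)
    (hmeet : pathVerts p r ∩ pathVerts q r' = {c}) {S : Set V} {i j k : ℕ}
    (hS : S ∩ pathVerts p r = {p i}) (hi : i ≤ r) (hj : j ≤ r') (hk1 : 1 ≤ k) (hk : k ≤ r)
    (hmem : p k ∈ S ∨ p k ∈ pathVerts p i ∨ p k ∈ pathVerts q j) : k ≤ i := by
  rcases hmem with hkS | ⟨m, hm, hpm⟩ | hkq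
  · exact (hp.injOn hk hi (Set.eq_of_mem_of_inter_eq_singleton hS hkS (mem_pathVerts hk))).le
  · exact hp.injOn (hm.trans hi) hk hpm ▸ hm
  · have hkc := Set.eq_of_mem_of_inter_eq_singleton hmeet (mem_pathVerts hk) (pathVerts_mono hj hkq)
    have := hp.injOn hk (Nat.zero_le r) (hkc.trans hp0.symm)
    omega

end IsometricPath

section ConnectingCycle

variable {G : SimpleGraph V} {p q : ℕ → V} {r r' : ℕ} {c : V}
  (hp : IsIsomPath G p r) (hq : IsIsomPath G q r') (hp0 : p 0 = c) (hq0 : q 0 = c)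
  {i j : ℕ} (hi : i ≤ r) (hj : j ≤ r') (W : G.Walk (p i) (q j))

def connCycle : G.Walk c c :=
  ((hp.walk i hi).copy hp0 rfl).append (W.append ((hq.walk j hj).copy hq0 rfl).reverse)

theorem mem_support_connCycle {v : V} :
    v ∈ (connCycle hp hq hp0 hq0 hi hj W).support ↔
      v ∈ W.support ∨ v ∈ pathVerts p i ∨ v ∈ pathVerts q j := by
  simp only [connCycle, Walk.mem_support_append_iff, Walk.support_reverse, List.mem_reverse,
    Walk.support_copy, hp.mem_support_walk, hq.mem_support_walk]
  tauto

theorem mem_edges_connCycle_of_mem {e : Sym2 V} (he : e ∈ W.edges) :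
    e ∈ (connCycle hp hq hp0 hq0 hi hj W).edges := by
  simp [connCycle, he]

theorem mk_mem_edges_connCycle (hi1 : 1 ≤ i) :
    s(p 0, p 1) ∈ (connCycle hp hq hp0 hq0 hi hj W).edges := by
  simp [connCycle, hp.mk_mem_edges_walk hi hi1]

theorem connCycle_isCycle (hmeet : pathVerts p r ∩ pathVerts q r' = {c}) (hi1 : 1 ≤ i)
    (hW : W.IsPath) (hWp : {z | z ∈ W.support} ∩ pathVerts p r = {p i})
    (hWq : {z | z ∈ W.support} ∩ pathVerts q r' = {q j}) :
    (connCycle hp hq hp0 hq0 hi hj W).IsCycle := by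
  have hA : ∀ z ∈ ((hp.walk i hi).copy hp0 rfl).support, z ∈ pathVerts p r := fun z hz =>
    pathVerts_mono hi ((hp.mem_support_walk hi).mp (by simpa using hz))
  have hB : ∀ z ∈ ((hq.walk j hj).copy hq0 rfl).support, z ∈ pathVerts q r' := fun z hz =>
    pathVerts_mono hj ((hq.mem_support_walk hj).mp (by simpa using hz))
  refine Walk.IsPath.isCycle_append_append_reverse (by simpa using hp.isPath_walk hi) hW
    (by simpa using hq.isPath_walk hj)
    (fun z hzA hzW => Set.eq_of_mem_of_inter_eq_singleton hWp hzW (hA z hzA))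
    (fun z hzW hzB => Set.eq_of_mem_of_inter_eq_singleton hWq hzW (hB z hzB))
    (fun z hzA hzB => Set.eq_of_mem_of_inter_eq_singleton hmeet (hA z hzA) (hB z hzB))
    (fun hic => ?_)
  have := hp.injOn hi (Nat.zero_le r) (hic.trans hp0.symm)
  omega

theorem mem_edges_of_mem_edges_connCycle {x' y' : V} {W' : G.Walk x' y'}
    (hW'p : {z | z ∈ W'.support} ∩ pathVerts p r = {x'})
    (hW'q : {z | z ∈ W'.support} ∩ pathVerts q r' = {y'}) {e : Sym2 V}
    (he' : e ∈ W'.edges) (he : e ∈ (connCycle hp hq hp0 hq0 hi hj W).edges) : e ∈ W.edges := by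
  simp only [connCycle, Walk.edges_append, Walk.edges_reverse, Walk.edges_copy, List.mem_append,
    List.mem_reverse] at he
  rcases he with heA | heW | heB
  · refine absurd heA (Walk.notMem_edges_of_mem_edges (w := x') (fun z hzW hzA => ?_) he')
    exact Set.eq_of_mem_of_inter_eq_singleton hW'p hzW
      (pathVerts_mono hi ((hp.mem_support_walk hi).mp hzA))
  · exact heW
  · refine absurd heB (Walk.notMem_edges_of_mem_edges (w := y') (fun z hzW hzB => ?_) he')
    exact Set.eq_of_mem_of_inter_eq_singleton hW'q hzW
      (pathVerts_mono hj ((hq.mem_support_walk hj).mp hzB))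

end ConnectingCycle

theorem cactus_at_most_one_connecting_path_general (G : SimpleGraph V)
    (hG : IsCactus G) (r r' : ℕ) (c : V)
    (p q : ℕ → V) (hp : IsIsomPath G p r) (hq : IsIsomPath G q r')
    (hp0 : p 0 = c) (hq0 : q 0 = c)
    (hmeet : pathVerts p r ∩ pathVerts q r' = {c})
    (x₁ y₁ x₂ y₂ : V) (W₁ : G.Walk x₁ y₁) (W₂ : G.Walk x₂ y₂)
    (h₁ : ConnPath G p q r r' c x₁ y₁ W₁) (h₂ : ConnPath G p q r r' c x₂ y₂ W₂) :
    x₁ = x₂ ∧ y₁ = y₂ ∧ W₁.support = W₂.support := by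
  obtain ⟨hW₁, ⟨i₁, hi₁, hir₁, rfl⟩, ⟨j₁, hj₁, hjr₁, rfl⟩, -, hP₁, hQ₁⟩ := h₁
  obtain ⟨hW₂, ⟨i₂, hi₂, hir₂, rfl⟩, ⟨j₂, hj₂, hjr₂, rfl⟩, -, hP₂, hQ₂⟩ := h₂
  have hC₁ := connCycle_isCycle hp hq hp0 hq0 hir₁ hjr₁ W₁ hmeet hi₁ hW₁ hP₁ hQ₁
  have hC₂ := connCycle_isCycle hp hq hp0 hq0 hir₂ hjr₂ W₂ hmeet hi₂ hW₂ hP₂ hQ₂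
  have hE := hG.2 c c _ _ hC₁ hC₂ _ (mk_mem_edges_connCycle hp hq hp0 hq0 hir₁ hjr₁ W₁ hi₁)
    (mk_mem_edges_connCycle hp hq hp0 hq0 hir₂ hjr₂ W₂ hi₂)
  have hV (v : V) := (mem_support_connCycle hp hq hp0 hq0 hir₁ hjr₁ W₁).symm.trans <|
    (Walk.mem_support_iff_of_forall_mem_edges_iff (w := v) hC₁.not_nil hC₂.not_nil hE).trans
      (mem_support_connCycle hp hq hp0 hq0 hir₂ hjr₂ W₂)
  have hmeet' := (Set.inter_comm _ _).trans hmeet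
  obtain rfl : i₁ = i₂ := le_antisymm
    (hp.le_of_mem hp0 hmeet hP₂ hir₂ hjr₂ hi₁ hir₁ ((hV _).1 (.inr (.inl (mem_pathVerts le_rfl)))))
    (hp.le_of_mem hp0 hmeet hP₁ hir₁ hjr₁ hi₂ hir₂ ((hV _).2 (.inr (.inl (mem_pathVerts le_rfl)))))
  obtain rfl : j₁ = j₂ := le_antisymm
    (hq.le_of_mem hq0 hmeet' hQ₂ hjr₂ hir₂ hj₁ hjr₁
      (((hV _).1 (.inr (.inr (mem_pathVerts le_rfl)))).imp_right Or.symm))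
    (hq.le_of_mem hq0 hmeet' hQ₁ hjr₁ hir₁ hj₂ hjr₂
      (((hV _).2 (.inr (.inr (mem_pathVerts le_rfl)))).imp_right Or.symm))
  refine ⟨rfl, rfl, congrArg Walk.support (hW₁.eq_of_forall_mem_edges_iff hW₂ fun e => ⟨?_, ?_⟩)⟩
  · exact fun he => mem_edges_of_mem_edges_connCycle hp hq hp0 hq0 hir₁ hjr₁ W₂ hP₁ hQ₁ he
      ((hE e).1 (mem_edges_connCycle_of_mem hp hq hp0 hq0 hir₁ hjr₁ W₁ he))
  · exact fun he => mem_edges_of_mem_edges_connCycle hp hq hp0 hq0 hir₁ hjr₁ W₁ hP₂ hQ₂ he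
      ((hE e).2 (mem_edges_connCycle_of_mem hp hq hp0 hq0 hir₁ hjr₁ W₂ he))

theorem cactus_at_most_one_connecting_path (G : SimpleGraph V) [Fintype V]
    (hG : IsCactus G) (r r' : ℕ) (hr : 1 ≤ r) (hrad : grad G = r) (c : V)
    (hc : ecc G c = r) (hr' : r - 1 ≤ r' ∧ r' ≤ r)
    (p q : ℕ → V) (hp : IsIsomPath G p r) (hq : IsIsomPath G q r')
    (hp0 : p 0 = c) (hq0 : q 0 = c)
    (hmeet : pathVerts p r ∩ pathVerts q r' = {c})
    (x₁ y₁ x₂ y₂ : V) (W₁ : G.Walk x₁ y₁) (W₂ : G.Walk x₂ y₂)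
    (h₁ : ConnPath G p q r r' c x₁ y₁ W₁) (h₂ : ConnPath G p q r r' c x₂ y₂ W₂) :
    x₁ = x₂ ∧ y₁ = y₂ ∧ W₁.support = W₂.support :=
  cactus_at_most_one_connecting_path_general G hG r r' c p q hp hq hp0 hq0 hmeet x₁ y₁ x₂ y₂ W₁ W₂
    h₁ h₂
end

section
/- Let G be a cactus and H an isometric subgraph of G consisting of a cycle C with three pendant isometric paths attached at three distinct vertices of C (the paths pairwise vertex-disjoint, each meeting C in exactly its attachment vertex). If M ⊆ V(H) is a multipacking of H, then M is also a multipacking of G. -/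
open SimpleGraph

variable {V : Type*}

def cycVerts (cyc : ℕ → V) (γ : ℕ) : Set V := {x | ∃ i, i < γ ∧ cyc i = x}

/-- An isometric subgraph of a cactus consisting of a cycle with three pendant
isometric paths attached at three distinct cycle vertices. -/
structure SpecialSubgraph (G : SimpleGraph V) where
  γ : ℕ
  hγ : 3 ≤ γ
  cyc : ℕ → V
  cycInj : ∀ i j, i < γ → j < γ → cyc i = cyc j → i = j
  cycAdj : ∀ i, i < γ → G.Adj (cyc i) (cyc ((i+1) % γ))
  t₀ : ℕ
  t₁ : ℕ
  t₂ : ℕ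
  ht₀ : t₀ < γ
  ht₁ : t₁ < γ
  ht₂ : t₂ < γ
  hne : t₀ ≠ t₁ ∧ t₁ ≠ t₂ ∧ t₀ ≠ t₂
  la : ℕ
  lb : ℕ
  ld : ℕ
  pw : ℕ → V
  qw : ℕ → V
  rw : ℕ → V
  hp : IsIsomPath G pw la
  hq : IsIsomPath G qw lb
  hr : IsIsomPath G rw ld
  hp0 : pw 0 = cyc t₀
  hq0 : qw 0 = cyc t₁
  hr0 : rw 0 = cyc t₂
  disjPQ : pathVerts pw la ∩ pathVerts qw lb = ∅
  disjQR : pathVerts qw lb ∩ pathVerts rw ld = ∅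
  disjPR : pathVerts pw la ∩ pathVerts rw ld = ∅
  meetP : pathVerts pw la ∩ cycVerts cyc γ = {cyc t₀}
  meetQ : pathVerts qw lb ∩ cycVerts cyc γ = {cyc t₁}
  meetR : pathVerts rw ld ∩ cycVerts cyc γ = {cyc t₂}

def SpecialSubgraph.verts {G : SimpleGraph V} (H : SpecialSubgraph G) : Set V :=
  cycVerts H.cyc H.γ ∪ pathVerts H.pw H.la ∪ pathVerts H.qw H.lb ∪ pathVerts H.rw H.ld

/-!
Every vertex `v` of `G` has a gate in `H`: a vertex `v'` of `H` with `d(v', u) ≤ d(v, u)` for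
all `u ∈ H`, so each ball around `v` meets `M ⊆ V(H)` in at most as many points as the ball of the
same radius around `v'`.

To find the gate, follow a shortest path from `v` to each `u ∈ H` up to the vertex where it first
enters `H`. Two distinct entry points, joined by a path inside `H`, close up to a cycle through a
vertex outside `H`. In a cactus two cycles sharing an edge coincide, so this cycle contains no edge
of `C`: the two entry points lie on a common pendant path. Comparing the cycles obtained from
nested segments of that path rules out a third entry point, and if the two entry points are
`w i` and `w j` with `i < j`, then `w (i + min (d(v, w i)) (j - i))` is a gate.
-/

namespace SimpleGraph

variable {G : SimpleGraph V}

theorem Walk.IsPath.append_of_support_inter {u v w : V} {p : G.Walk u v} {q : G.Walk v w}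
    (hp : p.IsPath) (hq : q.IsPath) (h : ∀ x ∈ p.support, x ∈ q.support → x = v) :
    (p.append q).IsPath := by
  rw [Walk.isPath_def, Walk.support_append]
  refine hp.support_nodup.append (hq.support_nodup.sublist q.support.tail_sublist)
    fun x hx hx' => ?_
  obtain rfl := h x hx (List.mem_of_mem_tail hx')
  have hnd := hq.support_nodup
  rw [← q.cons_tail_support] at hnd
  exact (List.nodup_cons.mp hnd).1 hx'

section

def chainWalk (G : SimpleGraph V) (f : ℕ → V) (i : ℕ) :
    (n : ℕ) → (∀ t < n, G.Adj (f (i + t)) (f (i + t + 1))) → G.Walk (f i) (f (i + n))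
  | 0, _ => Walk.nil
  | n + 1, h => (chainWalk G f i n fun t ht => h t (by omega)).concat (h n (by omega))

variable {f : ℕ → V} {i : ℕ}

theorem chainWalk_support :
    ∀ (n : ℕ) (h : ∀ t < n, G.Adj (f (i + t)) (f (i + t + 1))),
      (chainWalk G f i n h).support = (List.range (n + 1)).map fun t => f (i + t)
  | 0, h => by simp [chainWalk, List.range_succ]
  | n + 1, h => by
    rw [chainWalk, Walk.support_concat, chainWalk_support n]
    simp [List.range_succ, Nat.add_assoc]

theorem chainWalk_edges :
    ∀ (n : ℕ) (h : ∀ t < n, G.Adj (f (i + t)) (f (i + t + 1))),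
      (chainWalk G f i n h).edges = (List.range n).map fun t => s(f (i + t), f (i + t + 1))
  | 0, h => by simp [chainWalk]
  | n + 1, h => by
    rw [chainWalk, Walk.edges_concat, chainWalk_edges n]
    simp [List.range_succ, Nat.add_assoc]

theorem chainWalk_isPath {n : ℕ} (h : ∀ t < n, G.Adj (f (i + t)) (f (i + t + 1)))
    (hinj : ∀ t₁ t₂, t₁ ≤ n → t₂ ≤ n → f (i + t₁) = f (i + t₂) → t₁ = t₂) :
    (chainWalk G f i n h).IsPath := by
  rw [Walk.isPath_def, chainWalk_support]
  refine List.Nodup.map_on (fun t₁ h₁ t₂ h₂ heq => ?_) List.nodup_range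
  rw [List.mem_range] at h₁ h₂
  exact hinj t₁ t₂ (by omega) (by omega) heq

end

theorem Walk.exists_eq_append_of_end_mem {S : Set V} {a u : V} (W : G.Walk a u) (hu : u ∈ S) :
    ∃ e ∈ S, ∃ (P : G.Walk a e) (Q : G.Walk e u),
      W = P.append Q ∧ ∀ x ∈ P.support, x ∈ S → x = e := by
  induction W with
  | nil => exact ⟨_, hu, nil, nil, rfl, by simp⟩
  | @cons a b u hadj W ih =>
    by_cases ha : a ∈ S
    · exact ⟨a, ha, nil, cons hadj W, rfl, by simp⟩
    · obtain ⟨e, he, P, Q, rfl, hP⟩ := ih hu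
      refine ⟨e, he, cons hadj P, Q, rfl, fun x hx hxS => ?_⟩
      rcases List.mem_cons.mp (Walk.support_cons hadj P ▸ hx) with rfl | hx
      · exact absurd hxS ha
      · exact hP x hx hxS

def IsEntry (G : SimpleGraph V) (S : Set V) (v e : V) : Prop :=
  e ∈ S ∧ ∃ P : G.Walk v e, P.IsPath ∧ ∀ x ∈ P.support, x ∈ S → x = e

theorem Connected.exists_isEntry_dist_eq (hc : G.Connected) {S : Set V} (v : V) {u : V}
    (hu : u ∈ S) : ∃ e, G.IsEntry S v e ∧ G.dist v u = G.dist v e + G.dist e u := by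
  obtain ⟨W, hW, hWlen⟩ := hc.exists_path_of_dist v u
  obtain ⟨e, he, P, Q, rfl, hP⟩ := W.exists_eq_append_of_end_mem hu
  have hsplit : G.dist v u ≤ G.dist v e + G.dist e u := hc.dist_triangle
  have hP' : G.dist v e ≤ P.length := dist_le P
  have hQ' : G.dist e u ≤ Q.length := dist_le Q
  rw [Walk.length_append] at hWlen
  exact ⟨e, ⟨he, P, hW.of_append_left, hP⟩, by omega⟩

theorem Walk.exists_junction {v e₁ e₂ : V} {P₁ : G.Walk v e₁} {P₂ : G.Walk v e₂}
    (h₁ : P₁.IsPath) (h₂ : P₂.IsPath) :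
    ∃ (w : V) (Q₁ : G.Walk w e₁) (Q₂ : G.Walk w e₂), Q₁.IsPath ∧ Q₂.IsPath ∧
      Q₁.support ⊆ P₁.support ∧ Q₂.support ⊆ P₂.support ∧
      ∀ x ∈ Q₁.support, x ∈ Q₂.support → x = w := by
  classical
  obtain ⟨w, hw, R, T, hRT, hR⟩ :=
    P₁.reverse.exists_eq_append_of_end_mem (S := {x | x ∈ P₂.support}) P₂.start_mem_support
  have hRP₁ : R.support ⊆ P₁.support := fun x hx => by
    have hx := R.support_subset_support_append_left T hx
    rwa [← hRT, Walk.support_reverse, List.mem_reverse] at hx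
  refine ⟨w, R.reverse, P₂.dropUntil w hw, (hRT ▸ h₁.reverse).of_append_left.reverse,
    h₂.dropUntil hw, fun x hx => hRP₁ (by simpa using hx),
    P₂.support_dropUntil_subset_support hw, fun x hx hx₂ => ?_⟩
  exact hR x (by simpa using hx) (P₂.support_dropUntil_subset_support hw hx₂)

theorem Walk.exists_mem_notMem_of_mem_edges {S : Set V} {u w c : V} {Q : G.Walk u w}
    (hQ : ∀ y ∈ Q.support, y ∈ S → y = c) {e : Sym2 V} (he : e ∈ Q.edges) :
    ∃ a ∈ e, a ∉ S := by
  induction e using Sym2.ind with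
  | _ a b =>
    by_cases ha : a ∈ S
    · refine ⟨b, Sym2.mem_mk_right a b, fun hb => (Q.adj_of_mem_edges he).ne ?_⟩
      exact (hQ a (Q.fst_mem_support_of_mem_edges he) ha).trans
        (hQ b (Q.snd_mem_support_of_mem_edges he) hb).symm
    · exact ⟨a, Sym2.mem_mk_left a b, ha⟩

theorem exists_isCycle_of_isEntry {S : Set V} {v e₁ e₂ : V} (hne : e₁ ≠ e₂)
    (h₁ : G.IsEntry S v e₁) (h₂ : G.IsEntry S v e₂) (P : G.Walk e₁ e₂) (hP : P.IsPath)
    (hPS : ∀ x ∈ P.support, x ∈ S) :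
    ∃ (w : V) (Z : G.Walk w w), Z.IsCycle ∧ P.edges ⊆ Z.edges ∧
      (∀ e ∈ Z.edges, e ∈ P.edges ∨ ∃ a ∈ e, a ∉ S) ∧ ∃ e ∈ Z.edges, ∃ a ∈ e, a ∉ S := by
  obtain ⟨he₁, P₁, hP₁, hA₁⟩ := h₁
  obtain ⟨-, P₂, hP₂, hA₂⟩ := h₂
  obtain ⟨w, Q₁, Q₂, hQ₁, hQ₂, hQP₁, hQP₂, hjoin⟩ := Walk.exists_junction hP₁ hP₂
  have hA₁ : ∀ y ∈ Q₁.support, y ∈ S → y = e₁ := fun y hy => hA₁ y (hQP₁ hy)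
  have hA₂ : ∀ y ∈ Q₂.support, y ∈ S → y = e₂ := fun y hy => hA₂ y (hQP₂ hy)
  have hwS : w ∉ S := fun hw =>
    hne ((hA₁ w Q₁.start_mem_support hw).symm.trans (hA₂ w Q₂.start_mem_support hw))
  obtain ⟨x, hadj, Q₁, rfl⟩ := Walk.exists_eq_cons_of_ne (fun h : w = e₁ => hwS (h ▸ he₁)) Q₁
  rw [Walk.cons_isPath_iff] at hQ₁
  have hPQ₂ : (P.append Q₂.reverse).IsPath := hP.append_of_support_inter hQ₂.reverse
    fun y hy hy₂ => hA₂ y (by simpa using hy₂) (hPS y hy)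
  have hT : (Q₁.append (P.append Q₂.reverse)).IsPath := by
    refine hQ₁.1.append_of_support_inter hPQ₂ fun y hy hy' => ?_
    rcases (Walk.mem_support_append_iff _ _).mp hy' with hy' | hy'
    · exact hA₁ y (by simp [hy]) (hPS y hy')
    · exact absurd (hjoin y (by simp [hy]) (by simpa using hy') ▸ hy) hQ₁.2
  have hedges : (Walk.cons hadj (Q₁.append (P.append Q₂.reverse))).edges =
      (Walk.cons hadj Q₁).edges ++ (P.edges ++ Q₂.reverse.edges) := by
    simp [Walk.edges_append]
  refine ⟨w, Walk.cons hadj (Q₁.append (P.append Q₂.reverse)), ?_, ?_, ?_, ?_⟩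
  · refine (Walk.cons_isCycle_iff _ hadj).mpr ⟨hT, fun hwx => ?_⟩
    simp only [Walk.edges_append, List.mem_append, Walk.edges_reverse, List.mem_reverse] at hwx
    rcases hwx with hwx | hwx | hwx
    · exact hQ₁.2 (Q₁.fst_mem_support_of_mem_edges hwx)
    · exact hwS (hPS w (P.fst_mem_support_of_mem_edges hwx))
    · exact hadj.ne (hjoin x (by simp) (Q₂.snd_mem_support_of_mem_edges hwx)).symm
  · intro e he
    rw [hedges]
    simp [he]
  · intro e he
    rw [hedges] at he
    rcases List.mem_append.mp he with he | he
    · exact Or.inr (Walk.exists_mem_notMem_of_mem_edges hA₁ he)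
    rcases List.mem_append.mp he with he | he
    · exact Or.inl he
    · exact Or.inr (Walk.exists_mem_notMem_of_mem_edges (Q := Q₂.reverse) (by simpa using hA₂) he)
  · exact ⟨s(w, x), by simp, w, Sym2.mem_mk_left w x, hwS⟩

end SimpleGraph

namespace IsIsomPath

variable {G : SimpleGraph V} {w : ℕ → V} {k : ℕ}

theorem adj_s6 (hw : IsIsomPath G w k) {t : ℕ} (ht : t < k) : G.Adj (w t) (w (t + 1)) := by
  have h := hw t (t + 1) (by omega) (by omega)
  exact dist_eq_one_iff_adj.mp (by omega)

theorem inj (hw : IsIsomPath G w k) {i j : ℕ} (hi : i ≤ k) (hj : j ≤ k) (h : w i = w j) :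
    i = j := by
  have hd := hw i j hi hj
  rw [h, SimpleGraph.dist_self] at hd
  omega

theorem dist_le_of_dist_eq_add (hc : G.Connected) (hw : IsIsomPath G w k) {i j : ℕ}
    (hij : i ≤ j) (hj : j ≤ k) {v u : V}
    (h : G.dist v u = G.dist v (w i) + G.dist (w i) u ∨
      G.dist v u = G.dist v (w j) + G.dist (w j) u) :
    G.dist (w (i + min (G.dist v (w i)) (j - i))) u ≤ G.dist v u := by
  set m := min (G.dist v (w i)) (j - i)
  have hmi : G.dist (w (i + m)) (w i) = m := by
    rw [hw (i + m) i (by omega) (by omega)]; omega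
  have hmj : G.dist (w (i + m)) (w j) = j - i - m := by
    rw [hw (i + m) j (by omega) hj]; omega
  have hij' : G.dist (w i) (w j) ≤ G.dist (w i) v + G.dist v (w j) := hc.dist_triangle
  rw [hw i j (by omega) hj, SimpleGraph.dist_comm (u := w i)] at hij'
  rcases h with h | h
  · have : G.dist (w (i + m)) u ≤ G.dist (w (i + m)) (w i) + G.dist (w i) u := hc.dist_triangle
    omega
  · have : G.dist (w (i + m)) u ≤ G.dist (w (i + m)) (w j) + G.dist (w j) u := hc.dist_triangle
    omega

def segWalk (hw : IsIsomPath G w k) (i j : ℕ) (hij : i ≤ j) (hj : j ≤ k) : G.Walk (w i) (w j) :=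
  (chainWalk G w i (j - i) fun t ht => hw.adj_s6 (t := i + t) (by omega)).copy rfl
    (by congr 1; omega)

variable (hw : IsIsomPath G w k) {i j : ℕ} {hij : i ≤ j} {hj : j ≤ k}

theorem mem_segWalk_support {x : V} (hx : x ∈ (hw.segWalk i j hij hj).support) :
    ∃ t, i ≤ t ∧ t ≤ j ∧ w t = x := by
  rw [segWalk, Walk.support_copy, chainWalk_support] at hx
  obtain ⟨t, ht, rfl⟩ := List.mem_map.mp hx
  rw [List.mem_range] at ht
  exact ⟨i + t, by omega, by omega, rfl⟩

theorem segWalk_isPath : (hw.segWalk i j hij hj).IsPath := by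
  rw [segWalk, Walk.isPath_copy]
  refine chainWalk_isPath _ fun t₁ t₂ h₁ h₂ heq => ?_
  have := hw.inj (show i + t₁ ≤ k by omega) (show i + t₂ ≤ k by omega) heq
  omega

theorem mem_segWalk_edges {t : ℕ} (ht₁ : i ≤ t) (ht₂ : t < j) :
    s(w t, w (t + 1)) ∈ (hw.segWalk i j hij hj).edges := by
  rw [segWalk, Walk.edges_copy, chainWalk_edges]
  refine List.mem_map.mpr ⟨t - i, List.mem_range.mpr (by omega), ?_⟩
  rw [show i + (t - i) = t by omega]

end IsIsomPath

namespace SpecialSubgraph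

variable {G : SimpleGraph V} (H : SpecialSubgraph G)

def cycMod (t : ℕ) : V := H.cyc (t % H.γ)

theorem γ_pos : 0 < H.γ := by have := H.hγ; omega

theorem cycMod_mem (t : ℕ) : H.cycMod t ∈ cycVerts H.cyc H.γ :=
  ⟨t % H.γ, Nat.mod_lt _ H.γ_pos, rfl⟩

theorem cycMod_adj (t : ℕ) : G.Adj (H.cycMod t) (H.cycMod (t + 1)) := by
  have h := H.cycAdj (t % H.γ) (Nat.mod_lt _ H.γ_pos)
  rwa [Nat.mod_add_mod] at h

theorem cycMod_mod (t : ℕ) : H.cycMod (t % H.γ) = H.cycMod t := by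
  simp [cycMod]

theorem cycMod_mod_add_one (t : ℕ) : H.cycMod (t % H.γ + 1) = H.cycMod (t + 1) := by
  simp [cycMod, Nat.mod_add_mod]

theorem cycMod_of_lt {t : ℕ} (ht : t < H.γ) : H.cycMod t = H.cyc t := by
  simp [cycMod, Nat.mod_eq_of_lt ht]

theorem mod_eq_of_cycMod_eq {a b : ℕ} (h : H.cycMod a = H.cycMod b) : a % H.γ = b % H.γ :=
  H.cycInj _ _ (Nat.mod_lt _ H.γ_pos) (Nat.mod_lt _ H.γ_pos) h

def arcWalk (s n : ℕ) : G.Walk (H.cycMod s) (H.cycMod (s + n)) :=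
  chainWalk G H.cycMod s n fun t _ => H.cycMod_adj (s + t)

theorem arcWalk_support_subset (s n : ℕ) :
    ∀ x ∈ (H.arcWalk s n).support, x ∈ cycVerts H.cyc H.γ := by
  intro x hx
  rw [arcWalk, chainWalk_support] at hx
  obtain ⟨t, -, rfl⟩ := List.mem_map.mp hx
  exact H.cycMod_mem _

theorem arcWalk_isPath (s : ℕ) {n : ℕ} (hn : n < H.γ) : (H.arcWalk s n).IsPath := by
  refine chainWalk_isPath _ fun t₁ t₂ h₁ h₂ heq => ?_
  have h : t₁ ≡ t₂ [MOD H.γ] := Nat.ModEq.add_left_cancel' s (H.mod_eq_of_cycMod_eq heq)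
  rwa [Nat.ModEq, Nat.mod_eq_of_lt (by omega), Nat.mod_eq_of_lt (by omega)] at h

def cycWalk : G.Walk (H.cycMod 0) (H.cycMod 0) :=
  Walk.cons (H.cycMod_adj 0) ((H.arcWalk 1 (H.γ - 1)).copy rfl (by
    rw [show 1 + (H.γ - 1) = H.γ by have := H.γ_pos; omega, ← H.cycMod_mod, Nat.mod_self]))

-- The closing edge `cyc 0 — cyc 1` could reappear on the arc only if `γ ≤ 2`.
theorem cycWalk_isCycle : H.cycWalk.IsCycle := by
  have hγ := H.hγ
  rw [cycWalk, Walk.cons_isCycle_iff, Walk.isPath_copy, Walk.edges_copy, arcWalk, chainWalk_edges]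
  refine ⟨H.arcWalk_isPath 1 (by omega), fun hmem => ?_⟩
  obtain ⟨t, ht, heq⟩ := List.mem_map.mp hmem
  rw [List.mem_range] at ht
  have h₁ := H.mod_eq_of_cycMod_eq (a := 0) (b := 1 + t)
  have h₂ := H.mod_eq_of_cycMod_eq (a := 0 + 1) (b := 1 + t)
  have h₃ := H.mod_eq_of_cycMod_eq (a := 0) (b := 1 + t + 1)
  rw [Sym2.eq_iff] at heq
  simp only [Nat.zero_mod, Nat.mod_eq_of_lt (show 1 + t < H.γ by omega),
    Nat.mod_eq_of_lt (show 0 + 1 < H.γ by omega)] at h₁ h₂ h₃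
  rcases heq with ⟨h, -⟩ | ⟨h, h'⟩
  · exact absurd (h₁ h.symm) (by omega)
  · obtain rfl : t = 0 := by have := h₂ h.symm; omega
    rw [Nat.mod_eq_of_lt (show 1 + 0 + 1 < H.γ by omega)] at h₃
    exact absurd (h₃ h'.symm) (by omega)

theorem cycWalk_support_subset : ∀ x ∈ H.cycWalk.support, x ∈ cycVerts H.cyc H.γ := by
  intro x hx
  rw [cycWalk, Walk.support_cons, Walk.support_copy] at hx
  rcases List.mem_cons.mp hx with rfl | hx
  · exact H.cycMod_mem 0
  · exact H.arcWalk_support_subset _ _ x hx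

theorem cycMod_edge_mem_cycWalk (t : ℕ) : s(H.cycMod t, H.cycMod (t + 1)) ∈ H.cycWalk.edges := by
  have hγ := H.hγ
  rw [← H.cycMod_mod t, ← H.cycMod_mod_add_one t, cycWalk, Walk.edges_cons, Walk.edges_copy,
    arcWalk, chainWalk_edges]
  obtain h | h := Nat.eq_zero_or_pos (t % H.γ)
  · rw [h]
    exact List.mem_cons_self
  · refine List.mem_cons_of_mem _ (List.mem_map.mpr ⟨t % H.γ - 1, ?_, ?_⟩)
    · exact List.mem_range.mpr (by have := Nat.mod_lt t H.γ_pos; omega)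
    · rw [show 1 + (t % H.γ - 1) = t % H.γ by omega]

theorem exists_arcPath {s s' : ℕ} (hs : s < H.γ) (hs' : s' < H.γ) (hne : s ≠ s') :
    ∃ A : G.Walk (H.cyc s) (H.cyc s'), A.IsPath ∧ (∀ x ∈ A.support, x ∈ cycVerts H.cyc H.γ) ∧
      ∃ e ∈ A.edges, e ∈ H.cycWalk.edges := by
  obtain ⟨n, hn, hnpos, hend⟩ : ∃ n, n < H.γ ∧ 0 < n ∧ (s + n) % H.γ = s' := by
    rcases Nat.lt_or_gt_of_ne hne with h | h
    · exact ⟨s' - s, by omega, by omega, by rw [Nat.mod_eq_of_lt (by omega)]; omega⟩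
    · refine ⟨H.γ + s' - s, by omega, by omega, ?_⟩
      rw [show s + (H.γ + s' - s) = s' + H.γ by omega, Nat.add_mod_right, Nat.mod_eq_of_lt hs']
  have hu : H.cycMod s = H.cyc s := H.cycMod_of_lt hs
  have hv : H.cycMod (s + n) = H.cyc s' := by rw [cycMod, hend]
  refine ⟨(H.arcWalk s n).copy hu hv, by rw [Walk.isPath_copy]; exact H.arcWalk_isPath s hn,
    by simpa using H.arcWalk_support_subset s n, s(H.cycMod s, H.cycMod (s + 1)), ?_,
    H.cycMod_edge_mem_cycWalk s⟩
  rw [Walk.edges_copy, arcWalk, chainWalk_edges]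
  exact List.mem_map.mpr ⟨0, List.mem_range.mpr hnpos, rfl⟩

def leg : Fin 3 → ℕ → V
  | 0 => H.pw
  | 1 => H.qw
  | 2 => H.rw

def legLength : Fin 3 → ℕ
  | 0 => H.la
  | 1 => H.lb
  | 2 => H.ld

def legAttach : Fin 3 → ℕ
  | 0 => H.t₀
  | 1 => H.t₁
  | 2 => H.t₂

def legVerts (k : Fin 3) : Set V := pathVerts (H.leg k) (H.legLength k)

theorem isIsomPath_leg (k : Fin 3) : IsIsomPath G (H.leg k) (H.legLength k) := by
  fin_cases k
  exacts [H.hp, H.hq, H.hr]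

theorem legAttach_lt (k : Fin 3) : H.legAttach k < H.γ := by
  fin_cases k
  exacts [H.ht₀, H.ht₁, H.ht₂]

theorem legAttach_ne {k k' : Fin 3} (h : k ≠ k') : H.legAttach k ≠ H.legAttach k' := by
  have := H.hne
  fin_cases k <;> fin_cases k' <;> simp_all [legAttach] <;> omega

theorem leg_zero (k : Fin 3) : H.leg k 0 = H.cyc (H.legAttach k) := by
  fin_cases k
  exacts [H.hp0, H.hq0, H.hr0]

theorem legVerts_inter_cycVerts (k : Fin 3) :
    H.legVerts k ∩ cycVerts H.cyc H.γ = {H.cyc (H.legAttach k)} := by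
  fin_cases k
  exacts [H.meetP, H.meetQ, H.meetR]

theorem legVerts_disjoint {k k' : Fin 3} (h : k ≠ k') :
    H.legVerts k ∩ H.legVerts k' = ∅ := by
  have := H.disjPQ; have := H.disjQR; have := H.disjPR
  fin_cases k <;> fin_cases k' <;> simp_all [legVerts, leg, legLength, Set.inter_comm]

theorem legVerts_subset (k : Fin 3) : H.legVerts k ⊆ H.verts := by
  fin_cases k <;> intro x hx <;> simp_all [verts, legVerts, leg, legLength]

theorem cycVerts_subset : cycVerts H.cyc H.γ ⊆ H.verts := fun _ hx => by simp [verts, hx]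

theorem eq_of_mem_legVerts_of_mem_cycVerts {k : Fin 3} {x : V}
    (h₁ : x ∈ H.legVerts k) (h₂ : x ∈ cycVerts H.cyc H.γ) :
    x = H.cyc (H.legAttach k) := by
  have hx : x ∈ H.legVerts k ∩ cycVerts H.cyc H.γ := ⟨h₁, h₂⟩
  rwa [H.legVerts_inter_cycVerts k] at hx

theorem eq_of_mem_legVerts {k k' : Fin 3} {x : V} (h₁ : x ∈ H.legVerts k)
    (h₂ : x ∈ H.legVerts k') : k = k' := by
  by_contra h
  have hx : x ∈ H.legVerts k ∩ H.legVerts k' := ⟨h₁, h₂⟩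
  rwa [H.legVerts_disjoint h] at hx

theorem leg_mem_verts (k : Fin 3) {i : ℕ} (hi : i ≤ H.legLength k) : H.leg k i ∈ H.verts :=
  H.legVerts_subset k ⟨i, hi, rfl⟩

theorem mem_verts_cases {x : V} (hx : x ∈ H.verts) :
    (∃ k i, i ≤ H.legLength k ∧ H.leg k i = x) ∨
      (x ∈ cycVerts H.cyc H.γ ∧ ∀ k, x ∉ H.legVerts k) := by
  by_cases h : ∃ k, x ∈ H.legVerts k
  · obtain ⟨k, i, hi, rfl⟩ := h
    exact Or.inl ⟨k, i, hi, rfl⟩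
  · push Not at h
    refine Or.inr ⟨?_, h⟩
    rcases hx with ((hc | hp) | hq) | hr
    · exact hc
    · exact absurd hp (h 0)
    · exact absurd hq (h 1)
    · exact absurd hr (h 2)

def legDown (k : Fin 3) {i : ℕ} (hi : i ≤ H.legLength k) :
    G.Walk (H.leg k i) (H.cyc (H.legAttach k)) :=
  ((H.isIsomPath_leg k).segWalk 0 i (Nat.zero_le i) hi).reverse.copy rfl (H.leg_zero k)

theorem legDown_isPath (k : Fin 3) {i : ℕ} (hi : i ≤ H.legLength k) :
    (H.legDown k hi).IsPath := by
  rw [legDown, Walk.isPath_copy]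
  exact (IsIsomPath.segWalk_isPath _).reverse

theorem legDown_support_subset (k : Fin 3) {i : ℕ} (hi : i ≤ H.legLength k) :
    ∀ x ∈ (H.legDown k hi).support, x ∈ H.legVerts k := by
  intro x hx
  rw [legDown, Walk.support_copy, Walk.support_reverse, List.mem_reverse] at hx
  obtain ⟨t, -, ht, rfl⟩ := IsIsomPath.mem_segWalk_support _ hx
  exact ⟨t, by omega, rfl⟩

def SameLeg (x y : V) : Prop :=
  ∃ k i j, i ≤ H.legLength k ∧ j ≤ H.legLength k ∧ H.leg k i = x ∧ H.leg k j = y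

def HasCrossPath (x y : V) : Prop :=
  ∃ P : G.Walk x y, P.IsPath ∧ (∀ z ∈ P.support, z ∈ H.verts) ∧
    ∃ e ∈ P.edges, e ∈ H.cycWalk.edges

variable {H} in
theorem HasCrossPath.symm {x y : V} (h : H.HasCrossPath x y) : H.HasCrossPath y x := by
  obtain ⟨P, hP, hPH, e, he, heC⟩ := h
  exact ⟨P.reverse, hP.reverse, by simpa using hPH, e, by simpa using he, heC⟩

theorem exists_legCycPath {k : Fin 3} {i : ℕ} (hi : i ≤ H.legLength k) {s : ℕ} (hs : s < H.γ)
    (hne : s ≠ H.legAttach k) :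
    ∃ P : G.Walk (H.leg k i) (H.cyc s), P.IsPath ∧
      (∀ x ∈ P.support, x ∈ H.legVerts k ∪ cycVerts H.cyc H.γ) ∧
      ∃ e ∈ P.edges, e ∈ H.cycWalk.edges := by
  obtain ⟨A, hA, hAC, e, he, heC⟩ := H.exists_arcPath (H.legAttach_lt k) hs (Ne.symm hne)
  refine ⟨(H.legDown k hi).append A, (H.legDown_isPath k hi).append_of_support_inter hA
      fun x hx hx' => H.eq_of_mem_legVerts_of_mem_cycVerts
        (H.legDown_support_subset k hi x hx) (hAC x hx'),
    fun x hx => ?_, e, by simp [Walk.edges_append, he], heC⟩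
  rcases (Walk.mem_support_append_iff _ _).mp hx with hx | hx
  exacts [Or.inl (H.legDown_support_subset k hi x hx), Or.inr (hAC x hx)]

theorem legVerts_union_cycVerts_subset (k : Fin 3) :
    H.legVerts k ∪ cycVerts H.cyc H.γ ⊆ H.verts :=
  Set.union_subset (H.legVerts_subset k) H.cycVerts_subset

theorem hasCrossPath_leg_cyc {k : Fin 3} {i s : ℕ} (hi : i ≤ H.legLength k) (hs : s < H.γ)
    (hns : H.cyc s ∉ H.legVerts k) :
    H.HasCrossPath (H.leg k i) (H.cyc s) := by
  obtain ⟨P, hP, hPH, hPC⟩ := H.exists_legCycPath hi hs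
    fun h => hns ⟨0, Nat.zero_le _, by rw [H.leg_zero, h]⟩
  exact ⟨P, hP, fun z hz => H.legVerts_union_cycVerts_subset k (hPH z hz), hPC⟩

theorem hasCrossPath_leg_leg {k k' : Fin 3} {i j : ℕ} (hi : i ≤ H.legLength k)
    (hj : j ≤ H.legLength k') (hkk : k ≠ k') : H.HasCrossPath (H.leg k i) (H.leg k' j) := by
  obtain ⟨P, hP, hPH, e, he, heC⟩ :=
    H.exists_legCycPath hi (H.legAttach_lt k') (H.legAttach_ne hkk.symm)
  have hQ : ∀ z ∈ (H.legDown k' hj).reverse.support, z ∈ H.legVerts k' :=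
    fun z hz => H.legDown_support_subset k' hj z (by simpa using hz)
  refine ⟨P.append (H.legDown k' hj).reverse,
    hP.append_of_support_inter (H.legDown_isPath k' hj).reverse fun z hz hz' => ?_,
    fun z hz => ?_, e, by simp [Walk.edges_append, he], heC⟩
  · rcases hPH z hz with h | h
    · exact absurd (H.eq_of_mem_legVerts h (hQ z hz')) hkk
    · exact H.eq_of_mem_legVerts_of_mem_cycVerts (hQ z hz') h
  · rcases (Walk.mem_support_append_iff _ _).mp hz with hz | hz
    · exact H.legVerts_union_cycVerts_subset k (hPH z hz)
    · exact H.legVerts_subset k' (hQ z hz)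

theorem hasCrossPath_of_not_sameLeg {x y : V} (hx : x ∈ H.verts) (hy : y ∈ H.verts)
    (hne : x ≠ y) (hxy : ¬H.SameLeg x y) : H.HasCrossPath x y := by
  rcases H.mem_verts_cases hx with ⟨k, i, hi, rfl⟩ | ⟨⟨s, hs, rfl⟩, hx⟩ <;>
    rcases H.mem_verts_cases hy with ⟨k', j, hj, rfl⟩ | ⟨⟨s', hs', rfl⟩, hy⟩
  · refine H.hasCrossPath_leg_leg hi hj ?_
    rintro rfl
    exact hxy ⟨k, i, j, hi, hj, rfl, rfl⟩
  · exact H.hasCrossPath_leg_cyc hi hs' (hy k)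
  · exact (H.hasCrossPath_leg_cyc hj hs (hx k')).symm
  · obtain ⟨A, hA, hAC, hAC'⟩ := H.exists_arcPath hs hs' fun h => hne (h ▸ rfl)
    exact ⟨A, hA, fun z hz => H.cycVerts_subset (hAC z hz), hAC'⟩

variable {v : V}

theorem isEntry_sameLeg (hG : IsCactus G) {e₁ e₂ : V} (h₁ : G.IsEntry H.verts v e₁)
    (h₂ : G.IsEntry H.verts v e₂) (hne : e₁ ≠ e₂) : H.SameLeg e₁ e₂ := by
  by_contra hns
  obtain ⟨P, hP, hPH, e₀, he₀, he₀C⟩ := H.hasCrossPath_of_not_sameLeg h₁.1 h₂.1 hne hns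
  obtain ⟨_, Z, hZ, hPZ, -, e, heZ, a, hae, haH⟩ := exists_isCycle_of_isEntry hne h₁ h₂ P hP hPH
  -- `Z` shares the edge `e₀` with `C`, so it has the edges of `C`, none of which leaves `H`.
  have heC : e ∈ H.cycWalk.edges :=
    (hG.2 _ _ Z H.cycWalk hZ H.cycWalk_isCycle e₀ (hPZ he₀) he₀C e).mp heZ
  exact haH (H.cycVerts_subset
    (H.cycWalk_support_subset a (Walk.mem_support_of_mem_edges heC hae)))

theorem not_isEntry_three (hG : IsCactus G) {k : Fin 3} {n₁ n₂ n₃ : ℕ} (h₁₂ : n₁ < n₂)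
    (h₂₃ : n₂ < n₃) (h₃ : n₃ ≤ H.legLength k) (he₁ : G.IsEntry H.verts v (H.leg k n₁))
    (he₂ : G.IsEntry H.verts v (H.leg k n₂)) (he₃ : G.IsEntry H.verts v (H.leg k n₃)) :
    False := by
  have hw := H.isIsomPath_leg k
  have hseg : ∀ {i j} (hij : i ≤ j) (hj : j ≤ H.legLength k),
      ∀ x ∈ (hw.segWalk i j hij hj).support, x ∈ H.verts := by
    intro i j hij hj x hx
    obtain ⟨t, -, ht, rfl⟩ := hw.mem_segWalk_support hx
    exact H.leg_mem_verts k (by omega)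
  have hne : ∀ {i j}, i < j → j ≤ H.legLength k → H.leg k i ≠ H.leg k j := fun hij hj h => by
    have := hw.inj (by omega) hj h
    omega
  obtain ⟨_, Z₂, hZ₂, hsegZ₂, hZ₂edges, -⟩ := exists_isCycle_of_isEntry (hne h₁₂ (by omega))
    he₁ he₂ _ (hw.segWalk_isPath (hij := h₁₂.le) (hj := by omega)) (hseg _ _)
  obtain ⟨_, Z₃, hZ₃, hsegZ₃, -, -⟩ := exists_isCycle_of_isEntry (hne (h₁₂.trans h₂₃) h₃)
    he₁ he₃ _ (hw.segWalk_isPath (hij := (h₁₂.trans h₂₃).le) (hj := h₃)) (hseg _ _)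
  -- Both cycles contain the edge `n₁ — n₁ + 1`, so they coincide, but only `Z₃` can contain
  -- the edge `n₂ — n₂ + 1` of `H`.
  have hmid : s(H.leg k n₂, H.leg k (n₂ + 1)) ∈ Z₂.edges :=
    (hG.2 _ _ Z₃ Z₂ hZ₃ hZ₂ _ (hsegZ₃ (hw.mem_segWalk_edges le_rfl (by omega)))
      (hsegZ₂ (hw.mem_segWalk_edges le_rfl h₁₂)) _).mp
      (hsegZ₃ (hw.mem_segWalk_edges h₁₂.le h₂₃))
  rcases hZ₂edges _ hmid with hmid | ⟨a, ha, haH⟩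
  · obtain ⟨t, -, ht, heq⟩ := hw.mem_segWalk_support (Walk.snd_mem_support_of_mem_edges _ hmid)
    have := hw.inj (by omega) (by omega) heq
    omega
  · rcases Sym2.mem_iff.mp ha with rfl | rfl <;> exact haH (H.leg_mem_verts k (by omega))

theorem isEntry_eq_or_eq (hG : IsCactus G) {k : Fin 3} {i j : ℕ} (hij : i < j)
    (hj : j ≤ H.legLength k) (hi' : G.IsEntry H.verts v (H.leg k i))
    (hj' : G.IsEntry H.verts v (H.leg k j)) {e : V} (he : G.IsEntry H.verts v e) :
    e = H.leg k i ∨ e = H.leg k j := by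
  by_contra! hne
  obtain ⟨k', l, m, hl, hm, rfl, hmi⟩ := H.isEntry_sameLeg hG he hi' hne.1
  obtain rfl : k' = k := H.eq_of_mem_legVerts ⟨m, hm, hmi⟩ ⟨i, by omega, rfl⟩
  have hli : l ≠ i := fun h => hne.1 (h ▸ rfl)
  have hlj : l ≠ j := fun h => hne.2 (h ▸ rfl)
  obtain h | h | h : l < i ∨ i < l ∧ l < j ∨ j < l := by omega
  · exact H.not_isEntry_three hG h hij hj he hi' hj'
  · exact H.not_isEntry_three hG h.1 h.2 hj hi' he hj'
  · exact H.not_isEntry_three hG hij h hl hi' hj' he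

theorem exists_leg_of_isEntry_ne (hG : IsCactus G) {e₁ e₂ : V} (h₁ : G.IsEntry H.verts v e₁)
    (h₂ : G.IsEntry H.verts v e₂) (hne : e₁ ≠ e₂) :
    ∃ k i j, i < j ∧ j ≤ H.legLength k ∧
      ∀ e, G.IsEntry H.verts v e → e = H.leg k i ∨ e = H.leg k j := by
  obtain ⟨k, i, j, hi, hj, rfl, rfl⟩ := H.isEntry_sameLeg hG h₁ h₂ hne
  rcases Nat.lt_or_gt_of_ne fun h : i = j => hne (h ▸ rfl) with hij | hji
  · exact ⟨k, i, j, hij, hj, fun e he => H.isEntry_eq_or_eq hG hij hj h₁ h₂ he⟩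
  · exact ⟨k, j, i, hji, hi, fun e he => H.isEntry_eq_or_eq hG hji hi h₂ h₁ he⟩

theorem exists_gate (hG : IsCactus G) (v : V) :
    ∃ v' ∈ H.verts, ∀ u ∈ H.verts, G.dist v' u ≤ G.dist v u := by
  choose ent hent hdist using fun u (hu : u ∈ H.verts) => hG.1.exists_isEntry_dist_eq v hu
  have h₀ : H.cyc 0 ∈ H.verts := H.cycVerts_subset ⟨0, H.γ_pos, rfl⟩
  by_cases hone : ∀ u hu, ent u hu = ent _ h₀
  · refine ⟨ent _ h₀, (hent _ h₀).1, fun u hu => ?_⟩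
    rw [hdist u hu, hone u hu]
    omega
  push Not at hone
  obtain ⟨u₁, hu₁, hne⟩ := hone
  obtain ⟨k, i, j, hij, hj, hall⟩ := H.exists_leg_of_isEntry_ne hG (hent u₁ hu₁) (hent _ h₀) hne
  refine ⟨_, H.leg_mem_verts k (i := i + min (G.dist v (H.leg k i)) (j - i)) (by omega),
    fun u hu => (H.isIsomPath_leg k).dist_le_of_dist_eq_add hG.1 hij.le hj ?_⟩
  rcases hall _ (hent u hu) with h | h
  · exact Or.inl (h ▸ hdist u hu)
  · exact Or.inr (h ▸ hdist u hu)

theorem finite_verts : H.verts.Finite :=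
  (((Set.finite_lt_nat H.γ).image H.cyc).union ((Set.finite_le_nat H.la).image H.pw)).union
    ((Set.finite_le_nat H.lb).image H.qw) |>.union ((Set.finite_le_nat H.ld).image H.rw)

end SpecialSubgraph

theorem multipacking_of_special_subgraph_general (G : SimpleGraph V)
    (hG : IsCactus G) (H : SpecialSubgraph G) (M : Set V) (hM : M ⊆ H.verts)
    (hmpH : ∀ v ∈ H.verts, ∀ r : ℕ, 1 ≤ r → (M ∩ {u | G.dist v u ≤ r}).ncard ≤ r) :
    ∀ v : V, ∀ r : ℕ, 1 ≤ r → (M ∩ {u | G.dist v u ≤ r}).ncard ≤ r := by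
  intro v r hr
  obtain ⟨v', hv', hgate⟩ := H.exists_gate hG v
  refine le_trans (Set.ncard_le_ncard ?_ (H.finite_verts.subset (Set.inter_subset_left.trans hM)))
    (hmpH v' hv' r hr)
  rintro u ⟨huM, hu⟩
  exact ⟨huM, (hgate u (hM huM)).trans hu⟩

theorem multipacking_of_special_subgraph (G : SimpleGraph V) [Fintype V]
    (hG : IsCactus G) (H : SpecialSubgraph G) (M : Set V) (hM : M ⊆ H.verts)
    (hmpH : ∀ v ∈ H.verts, ∀ r : ℕ, 1 ≤ r → (M ∩ {u | G.dist v u ≤ r}).ncard ≤ r) :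
    ∀ v : V, ∀ r : ℕ, 1 ≤ r → (M ∩ {u | G.dist v u ≤ r}).ncard ≤ r :=
  multipacking_of_special_subgraph_general G hG H M hM hmpH
end

section
/- For each positive integer k, let G_k be the graph obtained from 3k disjoint 5-cycles A_i = (a_i, b_i, c_i, d_i, e_i, a_i), i = 1,...,3k, by adding the edges b_i e_{i+1} for i = 1,...,3k−1. Then the multipacking number of G_k equals 3k. -/
open SimpleGraph

variable {V : Type*}

noncomputable def pot {k : ℕ} (x : Fin (3*k) × Fin 5) : ℤ :=
  3 * (x.1.val : ℤ) + min ((x.2.val : ℤ) + 1) (4 - (x.2.val : ℤ))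

lemma pot_lip (k : ℕ) {u v : Fin (3*k) × Fin 5} (h : (Gk k).Adj u v) :
    |pot u - pot v| ≤ 1 := by
  have hrel : u ≠ v ∧ (pentRel k u v ∨ pentRel k v u) :=
    (SimpleGraph.fromRel_adj _ _ _).mp h
  have h2 := u.2.isLt
  have h3 := v.2.isLt
  rw [abs_sub_le_iff]
  unfold pot
  rcases hrel.2 with (⟨h1, hm⟩ | ⟨h1, hm1, hm2⟩) | (⟨h1, hm⟩ | ⟨h1, hm1, hm2⟩)
  · have h1' : u.1.val = v.1.val := by rw [h1]
    constructor <;> omega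
  · constructor <;> omega
  · have h1' : v.1.val = u.1.val := by rw [h1]
    constructor <;> omega
  · constructor <;> omega

lemma pot_walk (k : ℕ) {u v : Fin (3*k) × Fin 5} (p : (Gk k).Walk u v) :
    |pot u - pot v| ≤ (p.length : ℤ) := by
  induction p with
  | nil => simp
  | cons h p ih =>
    have h1 := pot_lip k h
    rename_i a b c
    have h2 := abs_sub_le (pot a) (pot b) (pot c)
    simp only [SimpleGraph.Walk.length_cons]
    push_cast
    linarith

lemma pot_dist (k : ℕ) (hc : (Gk k).Connected) (u v : Fin (3*k) × Fin 5) :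
    |pot u - pot v| ≤ ((Gk k).dist u v : ℤ) := by
  obtain ⟨p, hp⟩ := hc.exists_walk_length_eq_dist u v
  rw [← hp]
  exact pot_walk k p

lemma adj_succ (k : ℕ) (i : Fin (3*k)) {m m' : Fin 5} (h : (m.val + 1) % 5 = m'.val) :
    (Gk k).Adj (i, m) (i, m') := by
  rw [Gk, SimpleGraph.fromRel_adj]
  refine ⟨?_, Or.inl (Or.inl ⟨rfl, h⟩)⟩
  have := m.isLt
  intro he
  have h2 : m.val = m'.val := congrArg (fun p => (Prod.snd p).val) he
  omega

lemma adj_bridge (k : ℕ) {i j : Fin (3*k)} (h : i.val + 1 = j.val) :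
    (Gk k).Adj (i, (1 : Fin 5)) (j, (4 : Fin 5)) := by
  rw [Gk, SimpleGraph.fromRel_adj]
  refine ⟨?_, Or.inl (Or.inr ⟨h, rfl, rfl⟩)⟩
  intro he
  have h2 : i.val = j.val := congrArg (fun p => (Prod.fst p).val) he
  omega

lemma reach_ring (k : ℕ) (i : Fin (3*k)) (m : Fin 5) :
    (Gk k).Reachable (i, m) (i, (0 : Fin 5)) := by
  have e0 : (Gk k).Adj (i, (0:Fin 5)) (i, (1:Fin 5)) := adj_succ k i (by decide)
  have e1 : (Gk k).Adj (i, (1:Fin 5)) (i, (2:Fin 5)) := adj_succ k i (by decide)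
  have e2 : (Gk k).Adj (i, (2:Fin 5)) (i, (3:Fin 5)) := adj_succ k i (by decide)
  have e4 : (Gk k).Adj (i, (4:Fin 5)) (i, (0:Fin 5)) := adj_succ k i (by decide)
  have r1 : (Gk k).Reachable (i, (1:Fin 5)) (i, (0:Fin 5)) := e0.symm.reachable
  have r2 : (Gk k).Reachable (i, (2:Fin 5)) (i, (0:Fin 5)) := e1.symm.reachable.trans r1
  have r3 : (Gk k).Reachable (i, (3:Fin 5)) (i, (0:Fin 5)) := e2.symm.reachable.trans r2
  have r4 : (Gk k).Reachable (i, (4:Fin 5)) (i, (0:Fin 5)) := e4.reachable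
  fin_cases m
  · exact Reachable.refl _
  · exact r1
  · exact r2
  · exact r3
  · exact r4

lemma reach_zero (k : ℕ) (hk : 0 < 3*k) :
    ∀ n (h : n < 3*k), (Gk k).Reachable ((⟨n, h⟩ : Fin (3*k)), (0 : Fin 5)) (⟨0, hk⟩, (0 : Fin 5)) := by
  intro n
  induction n with
  | zero => intro h; exact Reachable.refl _
  | succ n ih =>
    intro h
    have hn : n < 3*k := by omega
    have hb : (Gk k).Adj ((⟨n, hn⟩ : Fin (3*k)), (1:Fin 5)) (⟨n+1, h⟩, (4:Fin 5)) :=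
      adj_bridge k rfl
    exact ((reach_ring k ⟨n+1, h⟩ 4).symm.trans hb.symm.reachable).trans
      ((reach_ring k ⟨n, hn⟩ 1).trans (ih hn))

lemma Gk_connected (k : ℕ) (hk : 1 ≤ k) : (Gk k).Connected := by
  have hk3 : 0 < 3*k := by omega
  rw [SimpleGraph.connected_iff]
  refine ⟨fun u v => ?_, ⟨((⟨0, hk3⟩ : Fin (3*k)), (0 : Fin 5))⟩⟩
  obtain ⟨i, m⟩ := u
  obtain ⟨j, m'⟩ := v
  have r1 := (reach_ring k i m).trans (reach_zero k hk3 i.val i.isLt)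
  have r2 := (reach_ring k j m').trans (reach_zero k hk3 j.val j.isLt)
  exact r1.trans r2.symm

lemma gdiam_pos (k : ℕ) (hk : 1 ≤ k) : 1 ≤ gdiam (Gk k) := by
  have hk3 : 0 < 3*k := by omega
  set v : Fin (3*k) × Fin 5 := (⟨0, hk3⟩, (0 : Fin 5)) with hv
  set u : Fin (3*k) × Fin 5 := (⟨0, hk3⟩, (1 : Fin 5)) with hu
  have hadj : (Gk k).Adj v u := adj_succ k _ (by decide)
  have hd : (Gk k).dist v u ≠ 0 := by
    rw [SimpleGraph.dist_ne_zero_iff_ne_and_reachable]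
    exact ⟨hadj.ne, hadj.reachable⟩
  calc 1 ≤ (Gk k).dist v u := by omega
    _ ≤ ecc (Gk k) v := Finset.le_sup (Finset.mem_univ u)
    _ ≤ gdiam (Gk k) := Finset.le_sup (Finset.mem_univ v)

lemma dist_le_one (k : ℕ) (i : Fin (3*k)) (z x : Fin 5)
    (h : z = x ∨ (z.val + 1) % 5 = x.val ∨ (x.val + 1) % 5 = z.val) :
    (Gk k).dist (i, z) (i, x) ≤ 1 := by
  rcases h with rfl | h | h
  · simp [SimpleGraph.dist_self]
  · simpa using SimpleGraph.dist_le (adj_succ k i h).toWalk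
  · simpa using SimpleGraph.dist_le (adj_succ k i h).symm.toWalk

lemma near (k : ℕ) (i : Fin (3*k)) (x y : Fin 5) (h : x ≠ y) :
    ∃ z : Fin 5, (Gk k).dist (i, z) (i, x) ≤ 1 ∧ (Gk k).dist (i, z) (i, y) ≤ 1 := by
  have key : ∀ x y : Fin 5, x ≠ y → ∃ z : Fin 5,
      (z = x ∨ (z.val + 1) % 5 = x.val ∨ (x.val + 1) % 5 = z.val) ∧
      (z = y ∨ (z.val + 1) % 5 = y.val ∨ (y.val + 1) % 5 = z.val) := by decide
  obtain ⟨z, h1, h2⟩ := key x y h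
  exact ⟨z, dist_le_one k i z x h1, dist_le_one k i z y h2⟩

lemma card_le_aux (k : ℕ) (hk : 1 ≤ k) (M : Set (Fin (3*k) × Fin 5))
    (hM : IsMultipacking (Gk k) M) : M.ncard ≤ 3*k := by
  have hinj : Set.InjOn Prod.fst M := by
    intro a ha b hb hab
    by_contra hne
    have h2 : a.2 ≠ b.2 := fun h => hne (Prod.ext hab h)
    obtain ⟨z, hz1, hz2⟩ := near k a.1 a.2 b.2 h2
    have hcond := hM (a.1, z) 1 le_rfl (gdiam_pos k hk)
    have hsub : ({a, b} : Set _) ⊆ M ∩ {u | (Gk k).dist (a.1, z) u ≤ 1} := by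
      rintro x (rfl | rfl)
      · exact ⟨ha, hz1⟩
      · refine ⟨hb, ?_⟩
        show (Gk k).dist (a.1, z) _ ≤ 1
        rw [hab] at hz2 ⊢
        simpa using hz2
    have h2le : 2 ≤ (M ∩ {u | (Gk k).dist (a.1, z) u ≤ 1}).ncard := by
      calc 2 = ({a, b} : Set _).ncard := (Set.ncard_pair hne).symm
        _ ≤ _ := Set.ncard_le_ncard hsub (Set.toFinite _)
    omega
  calc M.ncard = (Prod.fst '' M).ncard := (Set.ncard_image_of_injOn hinj).symm
    _ ≤ (Set.univ : Set (Fin (3*k))).ncard :=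
        Set.ncard_le_ncard (Set.subset_univ _) Set.finite_univ
    _ = 3*k := by simp [Set.ncard_univ]

lemma cmk_inj (k : ℕ) : Function.Injective (fun i : Fin (3*k) => (i, (2 : Fin 5))) :=
  fun a b h => (Prod.ext_iff.mp h).1

lemma pot_c (k : ℕ) (i : Fin (3*k)) :
    pot (i, (2 : Fin 5)) = 3 * (i.val : ℤ) + 2 := by
  simp [pot]

lemma exists_mp (k : ℕ) (hk : 1 ≤ k) :
    ∃ M : Set (Fin (3*k) × Fin 5), IsMultipacking (Gk k) M ∧ M.ncard = 3*k := by
  classical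
  have hc := Gk_connected k hk
  refine ⟨Set.range (fun i : Fin (3*k) => (i, (2 : Fin 5))), ?_, ?_⟩
  · intro v r hr _
    set T : Finset (Fin (3*k)) :=
      Finset.univ.filter (fun i => (Gk k).dist v (i, (2 : Fin 5)) ≤ r) with hT
    have hS : Set.range (fun i : Fin (3*k) => (i, (2 : Fin 5))) ∩ {u | (Gk k).dist v u ≤ r}
        = (fun i : Fin (3*k) => (i, (2 : Fin 5))) '' ↑T := by
      ext u
      constructor
      · rintro ⟨⟨i, rfl⟩, hu⟩
        exact ⟨i, by simp [hT]; exact hu, rfl⟩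
      · rintro ⟨i, hi, rfl⟩
        simp [hT] at hi
        exact ⟨⟨i, rfl⟩, hi⟩
    rw [hS, Set.ncard_image_of_injective _ (cmk_inj k), Set.ncard_coe_finset]
    rcases T.eq_empty_or_nonempty with he | hne
    · rw [he]; simpa using hr
    · set i0 := T.min' hne with hi0def
      have hi0 : i0 ∈ T := T.min'_mem hne
      have hd0 : |pot v - pot (i0, (2:Fin 5))| ≤ (r : ℤ) := by
        refine le_trans (pot_dist k hc v _) ?_
        have := (Finset.mem_filter.mp hi0).2
        exact_mod_cast this
      have key : ∀ i ∈ T, i.val ∈ Finset.Icc i0.val (i0.val + 2*r/3) := by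
        intro i hi
        have hdi : |pot v - pot (i, (2:Fin 5))| ≤ (r : ℤ) := by
          refine le_trans (pot_dist k hc v _) ?_
          have := (Finset.mem_filter.mp hi).2
          exact_mod_cast this
        rw [pot_c, abs_le] at hdi hd0
        have hle : i0 ≤ i := T.min'_le i hi
        have hle' : i0.val ≤ i.val := hle
        rw [Finset.mem_Icc]
        omega
      have hcard : T.card ≤ (Finset.Icc i0.val (i0.val + 2*r/3)).card :=
        Finset.card_le_card_of_injOn Fin.val key
          (fun a _ b _ h => Fin.val_injective h)
      rw [Nat.card_Icc] at hcard
      omega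
  · rw [← Set.image_univ, Set.ncard_image_of_injective _ (cmk_inj k), Set.ncard_univ]
    simp

theorem mp_Gk (k : ℕ) (hk : 1 ≤ k) : mp (Gk k) = 3 * k := by
  obtain ⟨M0, hM0, hcard⟩ := exists_mp k hk
  have hmem : 3*k ∈ {n | ∃ M : Set (Fin (3*k) × Fin 5),
      IsMultipacking (Gk k) M ∧ M.ncard = n} := ⟨M0, hM0, hcard⟩
  have hub : ∀ n ∈ {n | ∃ M : Set (Fin (3*k) × Fin 5),
      IsMultipacking (Gk k) M ∧ M.ncard = n}, n ≤ 3*k := by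
    rintro n ⟨M, hM, rfl⟩
    exact card_le_aux k hk M hM
  exact le_antisymm (csSup_le ⟨3*k, hmem⟩ hub) (le_csSup ⟨3*k, hub⟩ hmem)
end

section
/- For each positive integer k, let G_k be the graph obtained from 3k disjoint 5-cycles A_i = (a_i, b_i, c_i, d_i, e_i, a_i), i = 1,...,3k, by adding the edges b_i e_{i+1} for i = 1,...,3k−1. Then the broadcast domination number of G_k equals 4k. -/
open SimpleGraph

variable {V : Type*}

/-!
Lower bound: give weight `1` to eight vertices in every three consecutive pentagons (`c, d` in
pentagons `≡ 0`, `b, d, e` in pentagons `≡ 1`, `b, c, e` in pentagons `≡ 2 (mod 3)`, counting from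
`0`), `8k` in total. Using the explicit distance formula of `G_k`, every ball of radius `r ≥ 1`
carries weight at most `2r`, so a dominating broadcast, whose balls cover `G_k`, costs at least
`8k / 2 = 4k`. Upper bound: `a_i` broadcasting with strength `4` for `i ≡ 1 (mod 3)` covers
pentagons `i - 1, i, i + 1`.
-/

open Finset

section Broadcast

variable (G : SimpleGraph V)

lemma SimpleGraph.edist_le_add_of_le {u v w : V} {m n : ℕ} (huv : G.edist u v ≤ m)
    (hvw : G.edist v w ≤ n) : G.edist u w ≤ ↑(m + n) := by
  push_cast
  exact G.edist_triangle.trans (add_le_add huv hvw)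

lemma SimpleGraph.Walk.le_length_of_adj_le {G : SimpleGraph V} {D : V → V → ℕ}
    (hD0 : ∀ v, D v v = 0) (hD : ∀ u v w, G.Adj u v → D u w ≤ D v w + 1) {u w : V}
    (p : G.Walk u w) : D u w ≤ p.length := by
  induction p with
  | nil => simp [hD0]
  | cons h _ ih => exact (hD _ _ _ h).trans (by simpa using ih)

lemma SimpleGraph.le_edist_of_adj_le {D : V → V → ℕ} (hD0 : ∀ v, D v v = 0)
    (hD : ∀ u v w, G.Adj u v → D u w ≤ D v w + 1) (u w : V) : (D u w : ℕ∞) ≤ G.edist u w := by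
  by_cases h : G.Reachable u w
  · obtain ⟨p, hp⟩ := h.exists_walk_length_eq_edist
    rw [← hp]
    exact_mod_cast p.le_length_of_adj_le hD0 hD
  · simp [edist_eq_top_of_not_reachable h]

variable [Fintype V]

lemma dist_le_gdiam (u v : V) : G.dist u v ≤ gdiam G :=
  (le_sup (f := fun w => G.dist u w) (mem_univ v)).trans (le_sup (f := ecc G) (mem_univ u))

lemma gammaB_le_sum {f : V → ℕ} (hf : IsDomBroadcast G f) : gammaB G ≤ ∑ v, f v :=
  Nat.sInf_le ⟨f, hf, rfl⟩

/-- Weak duality between broadcast domination and weighted multipacking. -/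
lemma sum_le_mul_sum_of_dominating (w : V → ℕ) (c : ℕ)
    (hball : ∀ v r, 1 ≤ r → ∑ u ∈ univ.filter (fun u => G.dist v u ≤ r), w u ≤ c * r)
    {f : V → ℕ} (hf : ∀ u, ∃ v, 1 ≤ f v ∧ G.dist u v ≤ f v) : ∑ u, w u ≤ c * ∑ v, f v := by
  classical
  choose g hg_pos hg_dist using hf
  have hfiber : ∀ v, ∑ u ∈ univ.filter (fun u => g u = v), w u ≤ c * f v := by
    intro v
    rcases Nat.eq_zero_or_pos (f v) with hv | hv
    · refine (sum_eq_zero fun u hu => ?_).le.trans (Nat.zero_le _)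
      have := hg_pos u
      simp_all
    · refine (sum_le_sum_of_subset fun u hu => ?_).trans (hball v (f v) hv)
      simp only [mem_filter, mem_univ, true_and] at hu ⊢
      rw [G.dist_comm, ← hu]
      exact hg_dist u
  calc ∑ u, w u = ∑ v, ∑ u ∈ univ.filter (fun u => g u = v), w u := (sum_fiberwise _ g w).symm
    _ ≤ ∑ v, c * f v := sum_le_sum fun v _ => hfiber v
    _ = c * ∑ v, f v := (mul_sum _ _ _).symm

lemma sum_le_mul_gammaB (w : V → ℕ) (c : ℕ)
    (hball : ∀ v r, 1 ≤ r → ∑ u ∈ univ.filter (fun u => G.dist v u ≤ r), w u ≤ c * r)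
    {f : V → ℕ} (hf : IsDomBroadcast G f) : ∑ u, w u ≤ c * gammaB G := by
  obtain ⟨f', hf', hsum⟩ := Nat.sInf_mem (⟨_, f, hf, rfl⟩ :
    {n | ∃ f : V → ℕ, IsDomBroadcast G f ∧ ∑ v, f v = n}.Nonempty)
  rw [gammaB, ← hsum]
  exact sum_le_mul_sum_of_dominating G w c hball hf'.2

end Broadcast

section Distance

/-- Vertices `0, …, 4` of a pentagon are `a, b, c, d, e`. -/
def cycDist (x y : Fin 5) : ℕ := min (y - x).val (x - y).val

lemma cycDist_comm (x y : Fin 5) : cycDist x y = cycDist y x := min_comm _ _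

lemma cycDist_le_two : ∀ x y : Fin 5, cycDist x y ≤ 2 := by decide

lemma cycDist_lipschitz : ∀ x y : Fin 5,
    cycDist x y ≤ cycDist (x + 1) y + 1 ∧ cycDist (x + 1) y ≤ cycDist x y + 1 := by
  decide

/-- The distance in `Gk k` between `(i, x)` and `(j, y)`: a geodesic between different pentagons
runs through the bridges `b_i e_{i+1}`, crossing each intermediate pentagon from `e` to `b` in two
steps. -/
def gkDist (i : ℕ) (x : Fin 5) (j : ℕ) (y : Fin 5) : ℕ :=
  if i = j then cycDist x y
  else if i < j then cycDist x 1 + (3 * (j - i) - 2) + cycDist 4 y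
  else cycDist x 4 + (3 * (i - j) - 2) + cycDist 1 y

lemma gkDist_comm (i : ℕ) (x : Fin 5) (j : ℕ) (y : Fin 5) : gkDist i x j y = gkDist j y i x := by
  unfold gkDist
  rcases lt_trichotomy i j with h | rfl | h
  · rw [if_neg h.ne, if_pos h, if_neg h.ne', if_neg (not_lt.2 h.le), cycDist_comm x, cycDist_comm 4]
    ring
  · simp [cycDist_comm]
  · rw [if_neg h.ne', if_neg (not_lt.2 h.le), if_neg h.ne, if_pos h, cycDist_comm x, cycDist_comm 1]
    ring

lemma gkDist_self (i : ℕ) (x : Fin 5) : gkDist i x i x = 0 := by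
  simp [gkDist, cycDist]

lemma gkDist_add_one_le (i : ℕ) (x : Fin 5) (j : ℕ) (y : Fin 5) :
    gkDist i x j y ≤ gkDist i (x + 1) j y + 1 ∧ gkDist i (x + 1) j y ≤ gkDist i x j y + 1 := by
  have := cycDist_lipschitz x y
  have := cycDist_lipschitz x 1
  have := cycDist_lipschitz x 4
  unfold gkDist
  split_ifs <;> omega

lemma gkDist_bridge_le (i j : ℕ) (y : Fin 5) :
    gkDist i 1 j y ≤ gkDist (i + 1) 4 j y + 1 ∧ gkDist (i + 1) 4 j y ≤ gkDist i 1 j y + 1 := by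
  have := cycDist_le_two 1 y
  have := cycDist_le_two 4 y
  have h11 : cycDist 1 1 = 0 := rfl
  have h44 : cycDist 4 4 = 0 := rfl
  have h14 : cycDist 1 4 = 2 := rfl
  have h41 : cycDist 4 1 = 2 := rfl
  unfold gkDist
  split_ifs <;> omega

variable {k : ℕ}

lemma Gk_adj_add_one (i : Fin (3 * k)) (x : Fin 5) : (Gk k).Adj (i, x) (i, x + 1) := by
  refine (fromRel_adj _ _ _).2 ⟨by simp, Or.inl (Or.inl ⟨rfl, ?_⟩)⟩
  simp [Fin.val_add]

lemma Gk_adj_bridge {i j : Fin (3 * k)} (h : i.val + 1 = j.val) : (Gk k).Adj (i, 1) (j, 4) :=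
  (fromRel_adj _ _ _).2 ⟨by simp, Or.inl (Or.inr ⟨h, rfl, rfl⟩)⟩

lemma gkDist_le_of_adj {u v : Fin (3 * k) × Fin 5} (h : (Gk k).Adj u v)
    (w : Fin (3 * k) × Fin 5) :
    gkDist u.1 u.2 w.1 w.2 ≤ gkDist v.1 v.2 w.1 w.2 + 1 := by
  have hsucc : ∀ x y : Fin 5, (x.val + 1) % 5 = y.val → y = x + 1 := fun x y h => by
    ext; rw [← h, Fin.val_add]; rfl
  obtain ⟨i, x⟩ := u
  obtain ⟨j, y⟩ := v
  rcases ((fromRel_adj _ _ _).1 h).2 with (⟨rfl, h⟩ | ⟨hij, hx, hy⟩) | (⟨rfl, h⟩ | ⟨hji, hy, hx⟩)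
  · exact hsucc x y h ▸ (gkDist_add_one_le _ _ _ _).1
  · obtain rfl : x = 1 := Fin.ext hx
    obtain rfl : y = 4 := Fin.ext hy
    exact hij ▸ (gkDist_bridge_le _ _ _).1
  · exact hsucc y x h ▸ (gkDist_add_one_le _ _ _ _).2
  · obtain rfl : y = 1 := Fin.ext hy
    obtain rfl : x = 4 := Fin.ext hx
    exact hji ▸ (gkDist_bridge_le _ _ _).2

lemma gkDist_eq_of_lt {i j : ℕ} (h : i < j) (x y : Fin 5) :
    gkDist i x j y = cycDist x 1 + 1 + gkDist (i + 1) 4 j y := by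
  have h41 : cycDist 4 1 = 2 := rfl
  unfold gkDist
  split_ifs <;> omega

open Fin.NatCast in
lemma Gk_edist_add_le (i : Fin (3 * k)) (x : Fin 5) (n : ℕ) :
    (Gk k).edist (i, x) (i, x + (n : Fin 5)) ≤ n := by
  induction n with
  | zero => simp
  | succ n ih =>
    have hadj := (edist_eq_one_iff_adj.2 (Gk_adj_add_one i (x + (n : Fin 5)))).le
    rw [Nat.cast_succ (R := Fin 5), ← add_assoc]
    exact (Gk k).edist_le_add_of_le ih (n := 1) (by simpa using hadj)

open Fin.NatCast in
lemma Gk_edist_pent_le (i : Fin (3 * k)) (x y : Fin 5) :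
    (Gk k).edist (i, x) (i, y) ≤ cycDist x y := by
  have hxy := Gk_edist_add_le i x (y - x).val
  have hyx := Gk_edist_add_le i y (x - y).val
  simp only [Fin.cast_val_eq_self, add_sub_cancel] at hxy hyx
  unfold cycDist
  rcases min_choice (y - x).val (x - y).val with h | h <;> rw [h]
  · exact hxy
  · rwa [SimpleGraph.edist_comm]

lemma Gk_edist_le_of_add_eq (n : ℕ) :
    ∀ (i j : Fin (3 * k)) (x y : Fin 5), i.val + n = j.val →
      (Gk k).edist (i, x) (j, y) ≤ gkDist i x j y := by
  induction n with
  | zero =>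
    intro i j x y hij
    obtain rfl : i = j := Fin.ext hij
    simpa [gkDist] using Gk_edist_pent_le i x y
  | succ n ih =>
    intro i j x y hij
    let i' : Fin (3 * k) := ⟨i.val + 1, by omega⟩
    have hbridge := (edist_eq_one_iff_adj.2 (Gk_adj_bridge (i := i) (j := i') rfl)).le
    have hpath := (Gk k).edist_le_add_of_le
      ((Gk k).edist_le_add_of_le (Gk_edist_pent_le i x 1) (n := 1) (by simpa using hbridge))
      (ih i' j 4 y (by simp [i']; omega))
    rwa [gkDist_eq_of_lt (by omega)]

lemma Gk_edist_le (u v : Fin (3 * k) × Fin 5) : (Gk k).edist u v ≤ gkDist u.1 u.2 v.1 v.2 := by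
  rcases le_total u.1.val v.1.val with h | h
  · obtain ⟨n, hn⟩ := Nat.exists_eq_add_of_le h
    exact Gk_edist_le_of_add_eq n _ _ _ _ hn.symm
  · obtain ⟨n, hn⟩ := Nat.exists_eq_add_of_le h
    rw [edist_comm, gkDist_comm]
    exact Gk_edist_le_of_add_eq n _ _ _ _ hn.symm

lemma Gk_dist_eq (u v : Fin (3 * k) × Fin 5) : (Gk k).dist u v = gkDist u.1 u.2 v.1 v.2 := by
  have : (Gk k).edist u v = gkDist u.1 u.2 v.1 v.2 :=
    (Gk_edist_le u v).antisymm <| (Gk k).le_edist_of_adj_le (D := fun u v => gkDist u.1 u.2 v.1 v.2)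
      (fun v => gkDist_self _ _) (fun _ _ w h => gkDist_le_of_adj h w) u v
  rw [SimpleGraph.dist, this, ENat.toNat_natCast]

end Distance

/-- Row `c` lists the weights of `a, …, e` in a pentagon whose index is `c` modulo `3`. -/
def pentWeight : ZMod 3 → Fin 5 → ℕ := ![![0, 0, 1, 1, 0], ![0, 1, 0, 1, 1], ![0, 1, 1, 0, 1]]

def pentBall (c : ZMod 3) (a : Fin 5) (s : ℕ) : ℕ :=
  ∑ y, if cycDist a y ≤ s then pentWeight c y else 0

/-- The weight within distance `s` of a vertex `v` in a one-sided infinite chain of pentagons of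
classes `c, c + δ, c + 2δ, …` hanging off `v`, the `t`-th one entered at its vertex `a`, which lies
at distance `3t + 1` from `v`. -/
def chainBall (a : Fin 5) (δ : ZMod 3) : ZMod 3 → ℕ → ℕ
  | _, 0 => 0
  | c, 1 => pentBall c a 0
  | c, 2 => pentBall c a 1
  | c, s + 3 => pentBall c a (s + 2) + chainBall a δ (c + δ) s

/-- The weight of the ball of radius `r` about vertex `x` of a pentagon of class `c` in the
two-sided infinite chain of pentagons. -/
def ballBound (c : ZMod 3) (x : Fin 5) (r : ℕ) : ℕ :=
  pentBall c x r + chainBall 4 1 (c + 1) (r - cycDist x 1) +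
    chainBall 1 (-1) (c - 1) (r - cycDist x 4)

lemma chainBall_succ (a : Fin 5) (δ c : ZMod 3) (s : ℕ) :
    chainBall a δ c (s + 1) = pentBall c a s + chainBall a δ (c + δ) (s - 2) := by
  rcases s with _ | _ | _ | s <;> rfl

lemma pentBall_of_two_le (c : ZMod 3) (a : Fin 5) {s : ℕ} (hs : 2 ≤ s) :
    pentBall c a s = ∑ y, pentWeight c y :=
  sum_congr rfl fun y _ => if_pos ((cycDist_le_two a y).trans hs)

lemma chainBall_add_nine (a : Fin 5) {δ : ZMod 3} (hδ : δ ≠ 0) (c : ZMod 3) (s : ℕ) :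
    chainBall a δ c (s + 9) = chainBall a δ c s + 8 := by
  have hperiod : ∀ c δ : ZMod 3, δ ≠ 0 → c + δ + δ + δ = c ∧
      ∑ y, pentWeight c y + ∑ y, pentWeight (c + δ) y + ∑ y, pentWeight (c + δ + δ) y = 8 := by
    decide
  obtain ⟨hc, h8⟩ := hperiod c δ hδ
  rw [show s + 9 = s + 6 + 3 from rfl, chainBall, chainBall, chainBall, hc,
    pentBall_of_two_le _ _ (by omega), pentBall_of_two_le _ _ (by omega),
    pentBall_of_two_le _ _ (by omega)]
  omega

lemma ballBound_add_nine (c : ZMod 3) (x : Fin 5) {r : ℕ} (hr : 2 ≤ r) :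
    ballBound c x (r + 9) = ballBound c x r + 16 := by
  have h1 := cycDist_le_two x 1
  have h4 := cycDist_le_two x 4
  unfold ballBound
  rw [pentBall_of_two_le _ _ hr, pentBall_of_two_le _ _ (by omega),
    show r + 9 - cycDist x 1 = r - cycDist x 1 + 9 by omega,
    show r + 9 - cycDist x 4 = r - cycDist x 4 + 9 by omega,
    chainBall_add_nine _ one_ne_zero, chainBall_add_nine _ (neg_ne_zero.2 one_ne_zero)]
  ring

/-- Balls of the infinite chain gain weight `16 < 18` when the radius grows by `9`, so only the
radii up to `10` have to be checked. -/
lemma ballBound_le (c : ZMod 3) (x : Fin 5) {r : ℕ} (hr : 1 ≤ r) : ballBound c x r ≤ 2 * r := by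
  induction r using Nat.strong_induction_on with
  | _ r ih =>
    rcases lt_or_ge r 11 with hsmall | hlarge
    · have hbase : ∀ c x, ∀ r < 11, 1 ≤ r → ballBound c x r ≤ 2 * r := by decide
      exact hbase c x r hsmall hr
    · have hstep := ballBound_add_nine c x (r := r - 9) (by omega)
      rw [Nat.sub_add_cancel (by omega)] at hstep
      have := ih (r - 9) (by omega) (by omega)
      omega

lemma sum_range_le_chainBall (a : Fin 5) (δ : ZMod 3) (n : ℕ) :
    ∀ (c : ZMod 3) (s : ℕ), ∑ t ∈ range n, ∑ y,
      (if 1 + 3 * t + cycDist a y ≤ s then pentWeight (c + t * δ) y else 0) ≤ chainBall a δ c s := by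
  induction n with
  | zero => simp
  | succ n ih =>
    intro c s
    rcases s with _ | s
    · exact (sum_eq_zero fun t _ => sum_eq_zero fun y _ => if_neg (by omega)).trans_le
        (Nat.zero_le _)
    · have hfirst : ∑ y, (if 1 + 3 * 0 + cycDist a y ≤ s + 1
          then pentWeight (c + ((0 : ℕ) : ZMod 3) * δ) y else 0) = pentBall c a s :=
        sum_congr (by simp) fun y _ => by simp [add_comm 1]
      have hrest : ∀ t ∈ range n, ∑ y, (if 1 + 3 * (t + 1) + cycDist a y ≤ s + 1
          then pentWeight (c + ((t + 1 : ℕ) : ZMod 3) * δ) y else 0) =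
          ∑ y, (if 1 + 3 * t + cycDist a y ≤ s - 2 then pentWeight (c + δ + t * δ) y else 0) := by
        intro t _
        refine sum_congr rfl fun y _ => ?_
        rw [show c + ((t + 1 : ℕ) : ZMod 3) * δ = c + δ + t * δ by push_cast; ring]
        exact if_congr (by omega) rfl rfl
      rw [sum_range_succ', chainBall_succ, sum_congr rfl hrest, hfirst, add_comm]
      exact Nat.add_le_add_left (ih _ _) _

lemma sum_range_ballWeight_le {N i : ℕ} (hi : i < N) (x : Fin 5) (r : ℕ) :
    ∑ j ∈ range N, ∑ y, (if gkDist i x j y ≤ r then pentWeight j y else 0) ≤ ballBound i x r := by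
  set F : ℕ → ℕ := fun j => ∑ y, if gkDist i x j y ≤ r then pentWeight j y else 0
  have hsplit : ∑ j ∈ range N, F j =
      ∑ j ∈ range i, F j + F i + ∑ t ∈ range (N - (i + 1)), F (i + 1 + t) := by
    rw [← sum_range_succ, ← sum_Ico_eq_sum_range, sum_range_add_sum_Ico _ (by omega)]
  have hcenter : F i = pentBall i x r := sum_congr rfl fun y _ => by simp [gkDist]
  have hright : ∑ t ∈ range (N - (i + 1)), F (i + 1 + t) ≤
      chainBall 4 1 (i + 1) (r - cycDist x 1) := by
    refine (sum_congr rfl fun t _ => sum_congr rfl fun y _ => ?_).trans_le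
      (sum_range_le_chainBall 4 1 _ _ _)
    rw [show ((i + 1 + t : ℕ) : ZMod 3) = i + 1 + t * 1 by push_cast; ring]
    refine if_congr ?_ rfl rfl
    unfold gkDist
    rw [if_neg (by omega), if_pos (by omega)]
    omega
  have hleft : ∑ j ∈ range i, F j ≤ chainBall 1 (-1) (i - 1) (r - cycDist x 4) := by
    rw [← sum_range_reflect]
    refine (sum_congr rfl fun t ht => sum_congr rfl fun y _ => ?_).trans_le
      (sum_range_le_chainBall 1 (-1) _ _ _)
    have ht := mem_range.1 ht
    rw [show ((i - 1 - t : ℕ) : ZMod 3) = i - 1 + t * (-1) by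
      rw [Nat.cast_sub (by omega), Nat.cast_sub (by omega)]; push_cast; ring]
    refine if_congr ?_ rfl rfl
    unfold gkDist
    rw [if_neg (by omega), if_neg (by omega)]
    omega
  rw [hsplit, hcenter, ballBound]
  omega

lemma sum_range_three_mul {g : ℕ → ℕ} (hg : Function.Periodic g 3) (k : ℕ) :
    ∑ j ∈ range (3 * k), g j = k * (g 0 + g 1 + g 2) := by
  induction k with
  | zero => simp
  | succ k ih =>
    have hshift : ∀ t, g (3 * k + t) = g t := fun t => by
      rw [add_comm, mul_comm]
      exact hg.nat_mul k t
    rw [show 3 * (k + 1) = 3 * k + 3 by ring, sum_range_add, ih]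
    simp only [sum_range_succ, sum_range_zero, hshift]
    ring

lemma natCast_zmod_three_periodic {M : Type*} (g : ZMod 3 → M) :
    Function.Periodic (fun j : ℕ => g j) 3 := fun j =>
  congrArg g (by rw [Nat.cast_add, ZMod.natCast_self, add_zero])

section Gk

variable (k : ℕ)

def gkWeight (v : Fin (3 * k) × Fin 5) : ℕ := pentWeight v.1.val v.2

def gkBroadcast (v : Fin (3 * k) × Fin 5) : ℕ := if (v.1.val : ZMod 3) = 1 ∧ v.2 = 0 then 4 else 0

lemma sum_gkWeight : ∑ v, gkWeight k v = 8 * k := by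
  simp only [gkWeight]
  rw [Fintype.sum_prod_type, Fin.sum_univ_eq_sum_range (fun j => ∑ y, pentWeight j y),
    sum_range_three_mul (natCast_zmod_three_periodic fun c => ∑ y, pentWeight c y), mul_comm]
  congr 1

lemma sum_gkBroadcast : ∑ v, gkBroadcast k v = 4 * k := by
  simp only [gkBroadcast]
  rw [Fintype.sum_prod_type, Fin.sum_univ_eq_sum_range
    (fun j => ∑ y : Fin 5, if (j : ZMod 3) = 1 ∧ y = 0 then 4 else 0),
    sum_range_three_mul
      (natCast_zmod_three_periodic fun c => ∑ y : Fin 5, if c = 1 ∧ y = 0 then 4 else 0),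
    mul_comm]
  congr 1

lemma sum_ball_gkWeight_le (v : Fin (3 * k) × Fin 5) {r : ℕ} (hr : 1 ≤ r) :
    ∑ u ∈ univ.filter (fun u => (Gk k).dist v u ≤ r), gkWeight k u ≤ 2 * r := by
  rw [sum_filter, Fintype.sum_prod_type]
  simp only [Gk_dist_eq, gkWeight]
  rw [Fin.sum_univ_eq_sum_range
    (fun j => ∑ y, if gkDist v.1 v.2 j y ≤ r then pentWeight j y else 0)]
  exact (sum_range_ballWeight_le v.1.isLt v.2 r).trans (ballBound_le _ _ hr)

lemma four_le_gdiam_Gk (hk : 0 < k) : 4 ≤ gdiam (Gk k) := by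
  have h := dist_le_gdiam (Gk k) (⟨0, by omega⟩, 2) (⟨1, by omega⟩, 2)
  rwa [Gk_dist_eq] at h

lemma isDomBroadcast_gkBroadcast : IsDomBroadcast (Gk k) (gkBroadcast k) := by
  refine ⟨fun v => ?_, fun u => ?_⟩
  · unfold gkBroadcast
    split_ifs
    · exact four_le_gdiam_Gk k (by have := v.1.isLt; omega)
    · exact Nat.zero_le _
  · obtain ⟨⟨j, hj⟩, y⟩ := u
    have hclass : ((3 * (j / 3) + 1 : ℕ) : ZMod 3) = 1 := by
      simp [show (3 : ZMod 3) = 0 from rfl]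
    refine ⟨(⟨3 * (j / 3) + 1, by omega⟩, 0), ?_, ?_⟩
    · rw [gkBroadcast, if_pos ⟨hclass, rfl⟩]
      omega
    · rw [gkBroadcast, if_pos ⟨hclass, rfl⟩, Gk_dist_eq]
      have := cycDist_le_two y 0
      have := cycDist_le_two y 1
      have := cycDist_le_two y 4
      have h40 : cycDist 4 0 = 1 := rfl
      have h10 : cycDist 1 0 = 1 := rfl
      dsimp only
      unfold gkDist
      split_ifs <;> omega

end Gk

theorem gammaB_Gk_general (k : ℕ) : gammaB (Gk k) = 4 * k := by
  have hf := isDomBroadcast_gkBroadcast k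
  refine le_antisymm ((gammaB_le_sum _ hf).trans_eq (sum_gkBroadcast k)) ?_
  have h := sum_le_mul_gammaB (Gk k) (gkWeight k) 2 (fun v _ hr => sum_ball_gkWeight_le k v hr) hf
  rw [sum_gkWeight] at h
  omega

theorem gammaB_Gk (k : ℕ) (hk : 1 ≤ k) : gammaB (Gk k) = 4 * k :=
  gammaB_Gk_general k
end

section
/- For each positive integer k, the graph G_k (3k pentagons A_i = (a_i, b_i, c_i, d_i, e_i, a_i) with edges b_i e_{i+1} for 1 ≤ i ≤ 3k−1) admits a dominating broadcast of cost 4k; namely, the broadcast f with f(a_i) = 4 when i ≡ 2 (mod 3) and f(v) = 0 otherwise is dominating and has total cost 4k. Hence γ_b(G_k) ≤ 4k. -/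
open SimpleGraph

variable {V : Type*}

section Helpers
variable {G : SimpleGraph V} {a b c d e : V}

lemma dle1 (h : G.Adj a b) : G.dist a b ≤ 1 :=
  SimpleGraph.dist_le (h.toWalk)

lemma dle2 (h1 : G.Adj a b) (h2 : G.Adj b c) : G.dist a c ≤ 2 := by
  have := SimpleGraph.dist_le (SimpleGraph.Walk.cons h1 h2.toWalk)
  simpa using this

lemma dle3 (h1 : G.Adj a b) (h2 : G.Adj b c) (h3 : G.Adj c d) : G.dist a d ≤ 3 := by
  have := SimpleGraph.dist_le (SimpleGraph.Walk.cons h1 (SimpleGraph.Walk.cons h2 h3.toWalk))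
  simpa using this

lemma dle4 (h1 : G.Adj a b) (h2 : G.Adj b c) (h3 : G.Adj c d) (h4 : G.Adj d e) :
    G.dist a e ≤ 4 := by
  have := SimpleGraph.dist_le
    (SimpleGraph.Walk.cons h1 (SimpleGraph.Walk.cons h2 (SimpleGraph.Walk.cons h3 h4.toWalk)))
  simpa using this

lemma walk_lip (φ : V → ℤ) (hφ : ∀ x y, G.Adj x y → (φ x - φ y).natAbs ≤ 1)
    {u v : V} (p : G.Walk u v) : (φ u - φ v).natAbs ≤ p.length := by
  induction p with
  | nil => simp
  | @cons u w v h p ih =>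
      have h1 := hφ _ _ h
      have : (φ u - φ v).natAbs ≤ (φ u - φ w).natAbs + (φ w - φ v).natAbs := by
        have := Int.natAbs_add_le (φ u - φ w) (φ w - φ v)
        simpa using this
      simp only [SimpleGraph.Walk.length_cons]
      omega

lemma dist_ge (φ : V → ℤ) (hφ : ∀ x y, G.Adj x y → (φ x - φ y).natAbs ≤ 1)
    {u v : V} (hr : G.Reachable u v) : (φ u - φ v).natAbs ≤ G.dist u v := by
  obtain ⟨p, hp⟩ := hr.exists_walk_length_eq_dist
  exact hp ▸ walk_lip φ hφ p

end Helpers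

section GkLemmas
variable {k : ℕ}

lemma adj_pent (i : Fin (3*k)) (j j' : Fin 5) (h : (j.val + 1) % 5 = j'.val) :
    (Gk k).Adj (i, j) (i, j') := by
  refine ⟨?_, Or.inl (Or.inl ⟨rfl, h⟩)⟩
  intro hh
  have : j = j' := (Prod.mk.injEq _ _ _ _ ▸ hh).2
  have hj := j.isLt
  have := Fin.val_eq_of_eq this
  omega

lemma adj_cross (i i' : Fin (3*k)) (h : i.val + 1 = i'.val) :
    (Gk k).Adj (i, 1) (i', 4) := by
  refine ⟨?_, Or.inl (Or.inr ⟨h, rfl, rfl⟩)⟩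
  intro hh
  have : (1 : Fin 5) = 4 := (Prod.mk.injEq _ _ _ _ ▸ hh).2
  exact absurd (Fin.val_eq_of_eq this) (by decide)

lemma pdist0 (i : Fin (3*k)) (j : Fin 5) : (Gk k).dist (i, j) (i, 0) ≤ 2 := by
  fin_cases j
  · simp [SimpleGraph.dist_self]
  · exact le_trans (dle1 (adj_pent i 0 1 (by decide)).symm) one_le_two
  · exact dle2 (adj_pent i 1 2 (by decide)).symm (adj_pent i 0 1 (by decide)).symm
  · exact dle2 (adj_pent i 3 4 (by decide)) (adj_pent i 4 0 (by decide))
  · exact le_trans (dle1 (adj_pent i 4 0 (by decide))) one_le_two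

/-- distance to the a-vertex of the next pentagon -/
lemma next_dist (i m : Fin (3*k)) (hm : i.val + 1 = m.val) (j : Fin 5) :
    (Gk k).dist (i, j) (m, 0) ≤ 4 := by
  have hc : (Gk k).Adj (i, (1:Fin 5)) (m, 4) := adj_cross i m hm
  have hc2 : (Gk k).Adj (m, (4:Fin 5)) (m, 0) := adj_pent m 4 0 (by decide)
  fin_cases j
  · exact le_trans (dle3 (adj_pent i 0 1 (by decide)) hc hc2) (by norm_num)
  · exact le_trans (dle2 hc hc2) (by norm_num)
  · exact le_trans (dle3 (adj_pent i 1 2 (by decide)).symm hc hc2) (by norm_num)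
  · exact dle4 (adj_pent i 2 3 (by decide)).symm (adj_pent i 1 2 (by decide)).symm hc hc2
  · exact dle4 (adj_pent i 4 0 (by decide)) (adj_pent i 0 1 (by decide)) hc hc2

/-- distance to the a-vertex of the previous pentagon -/
lemma prev_dist (i m : Fin (3*k)) (hm : m.val + 1 = i.val) (j : Fin 5) :
    (Gk k).dist (i, j) (m, 0) ≤ 4 := by
  have hc : (Gk k).Adj (i, (4:Fin 5)) (m, 1) := (adj_cross m i hm).symm
  have hc2 : (Gk k).Adj (m, (1:Fin 5)) (m, 0) := (adj_pent m 0 1 (by decide)).symm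
  fin_cases j
  · exact le_trans (dle3 (adj_pent i 4 0 (by decide)).symm hc hc2) (by norm_num)
  · exact dle4 (adj_pent i 0 1 (by decide)).symm (adj_pent i 4 0 (by decide)).symm hc hc2
  · exact dle4 (adj_pent i 2 3 (by decide)) (adj_pent i 3 4 (by decide)) hc hc2
  · exact le_trans (dle3 (adj_pent i 3 4 (by decide)) hc hc2) (by norm_num)
  · exact le_trans (dle2 hc hc2) (by norm_num)

end GkLemmas

def c0 (n : ℕ) : ℤ :=
  if n = 0 then 2 else if n = 1 then 2 else if n = 2 then 1 else if n = 3 then 0 else 1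
def cc (n : ℕ) : ℤ :=
  if n = 0 then 1 else if n = 1 then 2 else if n = 2 then 2 else if n = 3 then 1 else 0

def phi {k : ℕ} (x : Fin (3*k) × Fin 5) : ℤ :=
  if x.1.val = 0 then c0 x.2.val else 3 * x.1.val + cc x.2.val

lemma phi_lip {k : ℕ} : ∀ x y : Fin (3*k) × Fin 5, (Gk k).Adj x y →
    ((phi x) - (phi y)).natAbs ≤ 1 := by
  have key : ∀ x y : Fin (3*k) × Fin 5, pentRel k x y →
      ((phi x) - (phi y)).natAbs ≤ 1 := by
    rintro ⟨i, j⟩ ⟨i', j'⟩ (⟨h1, h2⟩ | ⟨h1, h2, h3⟩)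
    · dsimp only at h1 h2
      subst h1
      have hj := j.isLt
      have hj' := j'.isLt
      simp only [phi, c0, cc]
      split_ifs <;> omega
    · dsimp only at h1 h2 h3
      have hj := j.isLt
      have hj' := j'.isLt
      simp only [phi, c0, cc]
      split_ifs <;> omega
  intro x y hadj
  rcases hadj with ⟨hne, h | h⟩
  · exact key x y h
  · have := key y x h
    omega

lemma range_sum (k : ℕ) :
    ∑ i ∈ Finset.range (3*k), (if i % 3 = 1 then (4:ℕ) else 0) = 4 * k := by
  induction k with
  | zero => simp
  | succ n ih =>
    have h3 : 3 * (n+1) = (3*n) + 1 + 1 + 1 := by ring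
    rw [h3, Finset.sum_range_succ, Finset.sum_range_succ, Finset.sum_range_succ, ih]
    have h0 : (3*n) % 3 = 0 := by omega
    have h1 : (3*n+1) % 3 = 1 := by omega
    have h2 : (3*n+1+1) % 3 = 2 := by omega
    simp [h0, h1, h2]
    ring

lemma Gk_sum (k : ℕ) :
    (∑ x : Fin (3*k) × Fin 5,
      (if x.1.val % 3 = 1 ∧ x.2.val = 0 then 4 else 0)) = 4 * k := by
  rw [Fintype.sum_prod_type]
  have hrow : ∀ i : Fin (3*k),
      (∑ j : Fin 5, if i.val % 3 = 1 ∧ j.val = 0 then (4:ℕ) else 0)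
      = if i.val % 3 = 1 then 4 else 0 := by
    intro i
    by_cases h : i.val % 3 = 1
    · simp only [h, true_and, Fin.sum_univ_five]
      decide
    · simp [h]
  rw [Finset.sum_congr rfl (fun i _ => hrow i)]
  rw [Fin.sum_univ_eq_sum_range (fun i => if i % 3 = 1 then (4:ℕ) else 0)]
  exact range_sum k

theorem Gk_dominating_broadcast (k : ℕ) (hk : 1 ≤ k) :
    IsDomBroadcast (Gk k)
      (fun x => if x.1.val % 3 = 1 ∧ x.2.val = 0 then 4 else 0) ∧
    (∑ x : Fin (3*k) × Fin 5,
      (if x.1.val % 3 = 1 ∧ x.2.val = 0 then 4 else 0)) = 4 * k ∧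
    gammaB (Gk k) ≤ 4 * k := by
  have h0lt : 0 < 3 * k := by omega
  have h1lt : 1 < 3 * k := by omega
  set u0 : Fin (3*k) × Fin 5 := (⟨0, h0lt⟩, 3) with hu0
  set u1 : Fin (3*k) × Fin 5 := (⟨1, h1lt⟩, 1) with hu1
  have hr : (Gk k).Reachable u0 u1 := by
    have a1 : (Gk k).Adj u0 (⟨0, h0lt⟩, 4) := adj_pent _ 3 4 (by decide)
    have a2 : (Gk k).Adj ((⟨0, h0lt⟩ : Fin (3*k)), (4 : Fin 5)) (⟨0, h0lt⟩, 0) :=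
      adj_pent _ 4 0 (by decide)
    have a3 : (Gk k).Adj ((⟨0, h0lt⟩ : Fin (3*k)), (0 : Fin 5)) (⟨0, h0lt⟩, 1) :=
      adj_pent _ 0 1 (by decide)
    have a4 : (Gk k).Adj ((⟨0, h0lt⟩ : Fin (3*k)), (1 : Fin 5)) (⟨1, h1lt⟩, 4) :=
      adj_cross _ _ (by simp)
    have a5 : (Gk k).Adj ((⟨1, h1lt⟩ : Fin (3*k)), (4 : Fin 5)) (⟨1, h1lt⟩, 0) :=
      adj_pent _ 4 0 (by decide)
    have a6 : (Gk k).Adj ((⟨1, h1lt⟩ : Fin (3*k)), (0 : Fin 5)) (⟨1, h1lt⟩, 1) :=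
      adj_pent _ 0 1 (by decide)
    exact a1.reachable.trans (a2.reachable.trans (a3.reachable.trans
      (a4.reachable.trans (a5.reachable.trans a6.reachable))))
  have hdist_low : 4 ≤ (Gk k).dist u0 u1 := by
    have := dist_ge phi (phi_lip) hr
    have hphi0 : phi u0 = 0 := by norm_num [hu0, phi, c0, show ((3:Fin 5)).val = 3 from rfl]
    have hphi1 : phi u1 = 5 := by
      norm_num [hu1, phi, cc, show ((1:Fin 5)).val = 1 from rfl,
        show ((⟨1, h1lt⟩ : Fin (3*k))).val = 1 from rfl]
    rw [hphi0, hphi1] at this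
    omega
  have hgdiam : 4 ≤ gdiam (Gk k) := by
    have h1 : (Gk k).dist u0 u1 ≤ ecc (Gk k) u0 :=
      Finset.le_sup (Finset.mem_univ u1)
    have h2 : ecc (Gk k) u0 ≤ gdiam (Gk k) :=
      Finset.le_sup (Finset.mem_univ u0)
    omega
  have hdom : IsDomBroadcast (Gk k)
      (fun x => if x.1.val % 3 = 1 ∧ x.2.val = 0 then 4 else 0) := by
    constructor
    · intro v
      dsimp only
      split <;> omega
    · rintro ⟨i, j⟩
      have hi := i.isLt
      have h3 : i.val % 3 = 0 ∨ i.val % 3 = 1 ∨ i.val % 3 = 2 := by omega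
      rcases h3 with h | h | h
      · have hm : i.val + 1 < 3 * k := by omega
        refine ⟨(⟨i.val + 1, hm⟩, 0), ?_, ?_⟩
        · simp only [if_pos (show (i.val+1) % 3 = 1 ∧ ((0:Fin 5)).val = 0 by
            exact ⟨by omega, rfl⟩)]
          omega
        · simp only [if_pos (show (i.val+1) % 3 = 1 ∧ ((0:Fin 5)).val = 0 by
            exact ⟨by omega, rfl⟩)]
          exact next_dist i ⟨i.val+1, hm⟩ rfl j
      · refine ⟨(i, 0), ?_, ?_⟩
        · simp only [if_pos (show i.val % 3 = 1 ∧ ((0:Fin 5)).val = 0 from ⟨h, rfl⟩)]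
          omega
        · simp only [if_pos (show i.val % 3 = 1 ∧ ((0:Fin 5)).val = 0 from ⟨h, rfl⟩)]
          exact le_trans (pdist0 i j) (by omega)
      · have him : i.val - 1 < 3 * k := by omega
        have hc : (i.val - 1) % 3 = 1 := by omega
        refine ⟨(⟨i.val - 1, him⟩, 0), ?_, ?_⟩
        · beta_reduce
          split
          · omega
          · rename_i hcc; exact absurd ⟨hc, rfl⟩ hcc
        · beta_reduce
          split
          · exact prev_dist i ⟨i.val-1, him⟩ (by show (i.val - 1) + 1 = i.val; omega) j
          · rename_i hcc; exact absurd ⟨hc, rfl⟩ hcc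
  refine ⟨hdom, Gk_sum k, ?_⟩
  exact Nat.sInf_le ⟨_, hdom, Gk_sum k⟩
end

section
/- Let G be a cactus with radius r and center c, and let P, Q be isometric paths from c of lengths r and r' (r−1 ≤ r' ≤ r) with V(P)∩V(Q) = {c}, such that no path in G joins a vertex of P∖{c} to a vertex of Q∖{c} while avoiding c and meeting P∪Q only at its endpoints. Then P ∪ Q is an isometric path in G of length r + r', and consequently mp(G) ≥ ⌈2·rad(G)/3⌉. -/
open SimpleGraph

variable {V : Type*}

lemma exists_prefix {G : SimpleGraph V} (S : Set V) {x y : V} (W : G.Walk x y) (hy : y ∈ S) :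
    ∃ z, z ∈ S ∧ ∃ (W₁ : G.Walk x z) (W₂ : G.Walk z y),
      W₁.append W₂ = W ∧ ∀ u ∈ W₁.support, u ∈ S → u = z := by
  induction W with
  | nil =>
    exact ⟨_, hy, Walk.nil, Walk.nil, rfl, fun u hu _ => by simpa using hu⟩
  | @cons a b c h W ih =>
    by_cases ha : a ∈ S
    · exact ⟨a, ha, Walk.nil, Walk.cons h W, rfl, fun u hu _ => by simpa using hu⟩
    · obtain ⟨z, hz, W₁, W₂, heq, hsup⟩ := ih hy
      refine ⟨z, hz, Walk.cons h W₁, W₂, by rw [Walk.cons_append, heq], ?_⟩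
      intro u hu huS
      rw [Walk.support_cons, List.mem_cons] at hu
      rcases hu with h1 | h2
      · exact absurd (h1 ▸ huS) ha
      · exact hsup u h2 huS

lemma extract_connPath {G : SimpleGraph V} (p q : ℕ → V) (r r' : ℕ) (c : V)
    (hp0 : p 0 = c) (hq0 : q 0 = c)
    {x y : V} (W : G.Walk x y) (hW : W.IsPath)
    (hx : x ∈ pathVerts p r) (hy : y ∈ pathVerts q r') (hc : c ∉ W.support) :
    ∃ (x' y' : V) (W' : G.Walk x' y'), ConnPath G p q r r' c x' y' W' := by
  -- first vertex of W lying on q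
  obtain ⟨z, hz, W₁, W₂, heq, hQonly⟩ := exists_prefix (pathVerts q r') W hy
  have hW₁path : W₁.IsPath := Walk.IsPath.of_append_left (heq ▸ hW)
  -- last vertex of W₁ lying on p
  obtain ⟨z', hz', V₁, V₂, heq2, hPonly⟩ := exists_prefix (pathVerts p r) W₁.reverse hx
  have hV₁path : V₁.IsPath := Walk.IsPath.of_append_left (heq2 ▸ hW₁path.reverse)
  have memV₁ : ∀ u, u ∈ V₁.reverse.support ↔ u ∈ V₁.support := by
    intro u; rw [Walk.support_reverse, List.mem_reverse]
  have subV₁W₁ : ∀ u ∈ V₁.support, u ∈ W₁.support := by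
    intro u hu
    have : u ∈ (V₁.append V₂).support := Walk.subset_support_append_left _ _ hu
    rw [heq2, Walk.support_reverse, List.mem_reverse] at this
    exact this
  have subW₁W : ∀ u ∈ W₁.support, u ∈ W.support := by
    intro u hu
    have : u ∈ (W₁.append W₂).support := Walk.subset_support_append_left _ _ hu
    rwa [heq] at this
  have subV₁W : ∀ u ∈ V₁.support, u ∈ W.support := fun u hu => subW₁W u (subV₁W₁ u hu)
  have hz'V₁ : z' ∈ V₁.support := Walk.end_mem_support _
  have hzV₁ : z ∈ V₁.support := Walk.start_mem_support _
  have hz'c : z' ≠ c := fun h => hc (h ▸ subV₁W z' hz'V₁)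
  have hzc : z ≠ c := fun h => hc (h ▸ subV₁W z hzV₁)
  obtain ⟨i, hi, hpi⟩ := hz'
  obtain ⟨j, hj, hqj⟩ := hz
  have hi1 : 1 ≤ i := by
    rcases Nat.eq_zero_or_pos i with h0 | h1
    · exact absurd (by rw [← hpi, h0, hp0]) hz'c.symm
    · exact h1
  have hj1 : 1 ≤ j := by
    rcases Nat.eq_zero_or_pos j with h0 | h1
    · exact absurd (by rw [← hqj, h0, hq0]) hzc.symm
    · exact h1
  refine ⟨z', z, V₁.reverse, hV₁path.reverse, ⟨i, hi1, hi, hpi⟩, ⟨j, hj1, hj, hqj⟩, ?_, ?_, ?_⟩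
  · intro h
    rw [memV₁] at h
    exact hc (subV₁W c h)
  · ext u
    simp only [Set.mem_inter_iff, Set.mem_setOf_eq, Set.mem_singleton_iff]
    constructor
    · rintro ⟨huSup, huP⟩
      exact hPonly u ((memV₁ u).mp huSup) huP
    · rintro rfl
      exact ⟨(memV₁ _).mpr hz'V₁, ⟨i, hi, hpi⟩⟩
  · ext u
    simp only [Set.mem_inter_iff, Set.mem_setOf_eq, Set.mem_singleton_iff]
    constructor
    · rintro ⟨huSup, huQ⟩
      exact hQonly u (subV₁W₁ u ((memV₁ u).mp huSup)) huQ
    · rintro rfl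
      exact ⟨(memV₁ _).mpr hzV₁, ⟨j, hj, hqj⟩⟩

theorem no_connecting_path_union_isometric (G : SimpleGraph V) [Fintype V]
    (hG : IsCactus G) (r r' : ℕ) (hr : 1 ≤ r) (hrad : grad G = r) (c : V)
    (hc : ecc G c = r) (hr' : r - 1 ≤ r' ∧ r' ≤ r)
    (p q : ℕ → V) (hp : IsIsomPath G p r) (hq : IsIsomPath G q r')
    (hp0 : p 0 = c) (hq0 : q 0 = c)
    (hmeet : pathVerts p r ∩ pathVerts q r' = {c})
    (hno : ¬ ∃ (x y : V) (W : G.Walk x y), ConnPath G p q r r' c x y W) :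
    IsIsomPath G (fun i => if i ≤ r' then q (r' - i) else p (i - r')) (r + r') ∧
    (2 * grad G + 2) / 3 ≤ mp G := by
  classical
  obtain ⟨hconn, -⟩ := hG
  -- cross-distance formula
  have hcross : ∀ a b, a ≤ r → b ≤ r' → G.dist (p a) (q b) = a + b := by
    intro a b ha hb
    have hpa : G.dist (p a) c = a := by
      have := hp a 0 ha (Nat.zero_le r)
      rw [hp0] at this
      simpa using this
    have hqb : G.dist c (q b) = b := by
      have := hq 0 b (Nat.zero_le r') hb
      rw [hq0] at this
      simpa using this
    have hub : G.dist (p a) (q b) ≤ a + b := by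
      calc G.dist (p a) (q b) ≤ G.dist (p a) c + G.dist c (q b) := hconn.dist_triangle
      _ = a + b := by rw [hpa, hqb]
    by_contra hne
    have hlt : G.dist (p a) (q b) < a + b := lt_of_le_of_ne hub hne
    obtain ⟨W, hWlen⟩ := hconn.exists_walk_length_eq_dist (p a) (q b)
    set P := W.bypass with hP
    have hPlen : P.length ≤ W.length := Walk.length_bypass_le W
    have hPpath : P.IsPath := Walk.bypass_isPath W
    by_cases hcP : c ∈ P.support
    · have h1 := SimpleGraph.dist_le (P.takeUntil c hcP)
      have h2 := SimpleGraph.dist_le (P.dropUntil c hcP)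
      rw [hpa] at h1
      rw [hqb] at h2
      have h3 : (P.takeUntil c hcP).length + (P.dropUntil c hcP).length = P.length := by
        have := congrArg Walk.length (P.take_spec hcP)
        rwa [Walk.length_append] at this
      omega
    · exact hno (extract_connPath p q r r' c hp0 hq0 P hPpath ⟨a, ha, rfl⟩ ⟨b, hb, rfl⟩ hcP)
  -- the combined path is isometric
  have hIso : IsIsomPath G (fun i => if i ≤ r' then q (r' - i) else p (i - r')) (r + r') := by
    have key : ∀ i j, i ≤ j → j ≤ r + r' →
        G.dist ((fun i => if i ≤ r' then q (r' - i) else p (i - r')) i)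
          ((fun i => if i ≤ r' then q (r' - i) else p (i - r')) j) = j - i := by
      intro i j hij hj
      by_cases hj' : j ≤ r'
      · have hi' : i ≤ r' := le_trans hij hj'
        simp only [if_pos hi', if_pos hj']
        have := hq (r' - i) (r' - j) (by omega) (by omega)
        rw [this]; omega
      · by_cases hi' : i ≤ r'
        · simp only [if_pos hi', if_neg hj']
          rw [G.dist_comm]
          have := hcross (j - r') (r' - i) (by omega) (by omega)
          rw [this]; omega
        · simp only [if_neg hi', if_neg hj']
          have := hp (i - r') (j - r') (by omega) (by omega)
          rw [this]; omega
    intro i j hi hj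
    rcases le_total i j with h | h
    · rw [key i j h hj]; omega
    · rw [G.dist_comm, key j i h hi]; omega
  refine ⟨hIso, ?_⟩
  -- build the multipacking
  set f : ℕ → V := fun i => if i ≤ r' then q (r' - i) else p (i - r') with hf
  set L := r + r' with hL
  have finj : ∀ a b, a ≤ L → b ≤ L → f a = f b → a = b := by
    intro a b ha hb hfab
    have := hIso a b ha hb
    rw [hfab, SimpleGraph.dist_self] at this
    omega
  set m := L / 3 with hm
  set M : Set V := (fun t => f (3*t)) '' Set.Iic m with hM
  have hcard : M.ncard = m + 1 := by
    rw [hM, Set.ncard_image_of_injOn, ← Finset.coe_Iic, Set.ncard_coe_finset, Nat.card_Iic]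
    intro a ha b hb hab
    have := finj (3*a) (3*b) (by simp at ha; omega) (by simp at hb; omega) hab
    omega
  have hmp : IsMultipacking G M := by
    intro v ρ hρ _
    set T : Set ℕ := {t | t ≤ m ∧ G.dist v (f (3*t)) ≤ ρ} with hT
    have hMb : M ∩ {u | G.dist v u ≤ ρ} = (fun t => f (3*t)) '' T := by
      ext u
      constructor
      · rintro ⟨⟨t, ht, rfl⟩, hd⟩
        exact ⟨t, ⟨ht, hd⟩, rfl⟩
      · rintro ⟨t, ⟨ht, hd⟩, rfl⟩
        exact ⟨⟨t, ht, rfl⟩, hd⟩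
    rcases Set.eq_empty_or_nonempty T with hTe | hTne
    · rw [hMb, hTe]
      simp
    · set t₀ := sInf T with ht₀
      have ht₀T : t₀ ∈ T := Nat.sInf_mem hTne
      have hsub : T ⊆ Set.Icc t₀ (t₀ + (2*ρ)/3) := by
        intro t ht
        refine ⟨Nat.sInf_le ht, ?_⟩
        have h1 : G.dist (f (3*t₀)) (f (3*t)) = max (3*t₀) (3*t) - min (3*t₀) (3*t) :=
          hIso (3*t₀) (3*t) (by have := ht₀T.1; omega) (by have := ht.1; omega)
        have h2 : G.dist (f (3*t₀)) (f (3*t)) ≤ G.dist (f (3*t₀)) v + G.dist v (f (3*t)) :=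
          hconn.dist_triangle
        rw [SimpleGraph.dist_comm (G := G) (u := f (3*t₀)) (v := v)] at h2
        have h3 := ht₀T.2
        have h4 := ht.2
        have h5 : t₀ ≤ t := Nat.sInf_le ht
        omega
      calc (M ∩ {u | G.dist v u ≤ ρ}).ncard = ((fun t => f (3*t)) '' T).ncard := by rw [hMb]
        _ ≤ T.ncard := Set.ncard_image_le ((Set.finite_Icc _ _).subset hsub)
        _ ≤ (Set.Icc t₀ (t₀ + (2*ρ)/3)).ncard := Set.ncard_le_ncard hsub (Set.finite_Icc _ _)
        _ = (2*ρ)/3 + 1 := by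
            rw [← Finset.coe_Icc, Set.ncard_coe_finset, Nat.card_Icc]; omega
        _ ≤ ρ := by omega
  have hbdd : BddAbove {n | ∃ M : Set V, IsMultipacking G M ∧ M.ncard = n} := by
    refine ⟨Fintype.card V, ?_⟩
    rintro n ⟨M', -, rfl⟩
    calc M'.ncard ≤ (Set.univ : Set V).ncard :=
          Set.ncard_le_ncard (Set.subset_univ M') Set.finite_univ
      _ = Fintype.card V := by rw [Set.ncard_univ, Nat.card_eq_fintype_card]
  have hle : m + 1 ≤ mp G := le_csSup hbdd ⟨M, hmp, hcard⟩
  rw [hrad]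
  have h1 : r - 1 ≤ r' := hr'.1
  omega
end
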